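/- arXiv:2310.17443 — 12 statements merged into one kernel-verified Lean document; each statement's English description precedes it below -/
import Mathlib

section
/- Let n ≥ 1, let R = (R_1, …, R_{n−1}) be a family of subsets of {1, …, n+1}, and let S be an R-admissible sequence. Then S satisfies the Generalized CI-F-R condition if and only if Sing_i(S) = ∅ for every i ∈ {1, …, n+1} (equivalently, Sing(S) = ∅). -/
/-- `S` is an `R`-admissible sequence: `R = (R_1, …, R_{n-1})` and `S = (S_1, …, S_n)` are
families of subsets of `{1, …, n+1}`, `|S_i| = i` for `1 ≤ i ≤ n`, and
`S_i ⊆ S_{i+1} ∪ R_i` for `1 ≤ i ≤ n-1`. -/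
def RAdmissible (n : ℕ) (R S : ℕ → Finset ℕ) : Prop :=
  (∀ t, 1 ≤ t → t ≤ n - 1 → R t ⊆ Finset.Icc 1 (n + 1)) ∧
  (∀ i, 1 ≤ i → i ≤ n → S i ⊆ Finset.Icc 1 (n + 1) ∧ (S i).card = i) ∧
  (∀ i, 1 ≤ i → i ≤ n - 1 → S i ⊆ S (i + 1) ∪ R i)

/-- The Generalized CI-F-R condition: for all `i, j ∈ {1, …, n+1}`, whenever `i ∈ S_k` for
some `k ∈ pos(j)` (i.e. `k ∈ {1, …, n-1}` with `j ∈ R_k`), then `j ∈ S_{h+1}` for every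
`h ∈ pos(i)` with `h ≥ k`. -/
def GenCIFR (n : ℕ) (R S : ℕ → Finset ℕ) : Prop :=
  ∀ i ∈ Finset.Icc 1 (n + 1), ∀ j ∈ Finset.Icc 1 (n + 1),
    ∀ k ∈ Finset.Icc 1 (n - 1), ∀ h ∈ Finset.Icc 1 (n - 1),
      j ∈ R k → i ∈ S k → i ∈ R h → k ≤ h → j ∈ S (h + 1)

/-- `(j, h+1) ∈ Sing_i(S)`: `h ∈ pos(i)`, `j ∉ S_{h+1}`, and there exists `k ≤ h` with
`k ∈ pos(j)` such that `i ∈ S_t` for all `k ≤ t ≤ h` and `i ∉ R_t` for all `k ≤ t ≤ h-1`. -/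
def SingCond (n : ℕ) (R S : ℕ → Finset ℕ) (i j h : ℕ) : Prop :=
  h ∈ Finset.Icc 1 (n - 1) ∧ i ∈ R h ∧ j ∉ S (h + 1) ∧
  ∃ k, k ≤ h ∧ k ∈ Finset.Icc 1 (n - 1) ∧ j ∈ R k ∧
    (∀ t, k ≤ t → t ≤ h → i ∈ S t) ∧ (∀ t, k ≤ t → t ≤ h - 1 → i ∉ R t)

/-- For `n ≥ 1`, a family `R` of subsets of `{1, …, n+1}` and an
`R`-admissible sequence `S`, the sequence `S` satisfies the Generalized CI-F-R condition
if and only if `Sing_i(S) = ∅` for every `i ∈ {1, …, n+1}` (equivalently `Sing(S) = ∅`). -/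
theorem genCIFR_iff_sing_empty (n : ℕ) (hn : 1 ≤ n) (R S : ℕ → Finset ℕ)
    (hadm : RAdmissible n R S) :
    GenCIFR n R S ↔ ∀ i ∈ Finset.Icc 1 (n + 1), ∀ j h, ¬ SingCond n R S i j h := by
  classical
  constructor
  · intro hg i hi j h hs
    obtain ⟨hh, hiR, hjS, k, hkh, hk, hjR, hSt, -⟩ := hs
    obtain ⟨hk1, hk2⟩ := Finset.mem_Icc.mp hk
    have hj : j ∈ Finset.Icc 1 (n + 1) := hadm.1 k hk1 hk2 hjR
    exact hjS (hg i hi j hj k hk h hh hjR (hSt k le_rfl hkh) hiR hkh)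
  · intro hsing
    have main : ∀ m k, n - 1 - k = m → ∀ i j h, k ∈ Finset.Icc 1 (n - 1) →
        h ∈ Finset.Icc 1 (n - 1) → j ∈ R k → i ∈ S k → i ∈ R h → k ≤ h →
        j ∈ S (h + 1) := by
      intro m
      induction m using Nat.strong_induction_on with
      | _ m IH =>
        intro k hm i j h hk hh hjR hiS hiR hkh
        obtain ⟨hk1, hk2⟩ := Finset.mem_Icc.mp hk
        obtain ⟨hh1, hh2⟩ := Finset.mem_Icc.mp hh
        by_contra hjS
        have hiIcc : i ∈ Finset.Icc 1 (n + 1) :=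
          (hadm.2.1 k hk1 (by omega)).1 hiS
        -- propagation of i through S while i avoids R
        have prop : ∀ b, k ≤ b → b ≤ h → (∀ t, k ≤ t → t < b → i ∉ R t) → i ∈ S b := by
          intro b
          induction b with
          | zero => intro h1 _ _; omega
          | succ b ih =>
            intro h1 h2 hnot
            rcases Nat.lt_or_ge k (b + 1) with hlt | hge
            · have hb : i ∈ S b := ih (by omega) (by omega)
                (fun t ht1 ht2 => hnot t ht1 (by omega))
              have hu := hadm.2.2 b (by omega) (by omega) hb
              rcases Finset.mem_union.mp hu with h' | h'
              · exact h'
              · exact absurd h' (hnot b (by omega) (by omega))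
            · have hkb : k = b + 1 := by omega
              exact hkb ▸ hiS
        by_cases hcase : ∃ t, k ≤ t ∧ t < h ∧ i ∈ R t
        · -- Case B: i enters some R_t before h; take the first such t0.
          set t0 := Nat.find hcase with ht0def
          obtain ⟨ht0k, ht0h, ht0R⟩ := Nat.find_spec hcase
          have ht0min : ∀ t, k ≤ t → t < t0 → i ∉ R t := by
            intro t h1 h2 hR
            exact Nat.find_min hcase h2 ⟨h1, by omega, hR⟩
          have hjt0 : j ∈ S (t0 + 1) := by
            by_contra hjn
            exact hsing i hiIcc j t0
              ⟨Finset.mem_Icc.mpr ⟨by omega, by omega⟩, ht0R, hjn, k, ht0k, hk, hjR,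
                fun t h1 h2 =>
                  prop t h1 (by omega) (fun u hu1 hu2 => ht0min u hu1 (by omega)),
                fun t h1 h2 => ht0min t h1 (by omega)⟩
          have hQ : ∃ t, t0 + 1 ≤ t ∧ t ≤ h ∧ j ∉ S (t + 1) := ⟨h, by omega, le_rfl, hjS⟩
          set t1 := Nat.find hQ with ht1def
          obtain ⟨ht1a, ht1b, ht1n⟩ := Nat.find_spec hQ
          have hjt1 : j ∈ S t1 := by
            rcases Nat.eq_or_lt_of_le ht1a with heq | hlt
            · rw [ht1def, ← heq]; exact hjt0
            · have hmin := Nat.find_min hQ (show t1 - 1 < t1 by omega)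
              have hq : j ∈ S (t1 - 1 + 1) := by
                by_contra hc
                exact hmin ⟨by omega, by omega, hc⟩
              have heq : t1 - 1 + 1 = t1 := by omega
              rwa [heq] at hq
          have hjR1 : j ∈ R t1 := by
            have hu := hadm.2.2 t1 (by omega) (by omega) hjt1
            rcases Finset.mem_union.mp hu with h' | h'
            · exact absurd h' ht1n
            · exact h'
          exact ht1n (IH (n - 1 - t1) (by omega) t1 rfl j j t1
            (Finset.mem_Icc.mpr ⟨by omega, by omega⟩)
            (Finset.mem_Icc.mpr ⟨by omega, by omega⟩) hjR1 hjt1 hjR1 le_rfl)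
        · -- Case A: direct SingCond
          have hall : ∀ t, k ≤ t → t ≤ h → i ∈ S t := by
            intro t h1 h2
            exact prop t h1 h2 (fun u hu1 hu2 hR => hcase ⟨u, hu1, by omega, hR⟩)
          exact hsing i hiIcc j h
            ⟨hh, hiR, hjS, k, hkh, hk, hjR, hall,
              fun t h1 h2 hR => hcase ⟨t, h1, by omega, hR⟩⟩
    intro i hi j hj k hk h hh hjR hiS hiR hkh
    exact main _ k rfl i j h hk hh hjR hiS hiR hkh
end

section
/- Let n ≥ 1, let R = (R_1, …, R_{n−1}) be a family of subsets of {1, …, n+1}, and let S be an R-admissible sequence satisfying the Generalized CI-F-R condition. Then S_i ⊆ S_{i+1} for all 1 ≤ i ≤ n−1. -/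
/-- If `S` is an `R`-admissible sequence satisfying the Generalized CI-F-R
condition, then `S_i ⊆ S_{i+1}` for all `1 ≤ i ≤ n-1`. -/
theorem genCIFR_saturation (n : ℕ) (hn : 1 ≤ n) (R S : ℕ → Finset ℕ)
    (hadm : RAdmissible n R S) (hcifr : GenCIFR n R S) :
    ∀ i, 1 ≤ i → i ≤ n - 1 → S i ⊆ S (i + 1) := by
  obtain ⟨hR, hS, hsub⟩ := hadm
  intro i hi1 hi2 x hx
  have hxIcc : x ∈ Finset.Icc 1 (n + 1) :=
    (hS i hi1 (le_trans hi2 (Nat.sub_le n 1))).1 hx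
  have hiIcc : i ∈ Finset.Icc 1 (n - 1) := Finset.mem_Icc.mpr ⟨hi1, hi2⟩
  have := hsub i hi1 hi2 hx
  rcases Finset.mem_union.mp this with h | h
  · exact h
  · exact hcifr x hxIcc x hxIcc i hiIcc i hiIcc h hx h le_rfl
end

section
/- Let n ≥ 1, let R = (R_1, …, R_{n−1}) be a family of subsets of {1, …, n+1}, and let S be an R-admissible sequence. Then |Mut(S)| equals the number of pairs (C, D) where C = [a,e]^i is a connected component of Q_S, D = [a′,b′]^j is a connected component of the complement, and a′ ≤ a ≤ b′ ≤ e. -/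
/-- A mutation of `S` from row `i` to row `j`, given by columns `a ≤ b`. -/
def IsMut (n : ℕ) (R S : ℕ → Finset ℕ) (i j a b : ℕ) : Prop :=
  1 ≤ a ∧ a ≤ b ∧ b ≤ n ∧
  (∀ t, a ≤ t → t ≤ b → i ∈ S t) ∧ (∀ t, a ≤ t → t ≤ b - 1 → i ∉ R t) ∧
  (a = 1 ∨ i ∉ S (a - 1) ∨ i ∈ R (a - 1)) ∧
  (∀ t, a ≤ t → t ≤ b → j ∉ S t) ∧ (∀ t, a ≤ t → t ≤ b - 1 → j ∉ R t) ∧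
  (b = n ∨ j ∈ S (b + 1) ∨ j ∈ R b)

/-- The set `Mut(S)` of all mutations of `S`, as triples `(i, j, (a, b))`. -/
def Mut (n : ℕ) (R S : ℕ → Finset ℕ) : Set (ℕ × ℕ × ℕ × ℕ) :=
  {q | q.1 ∈ Finset.Icc 1 (n + 1) ∧ q.2.1 ∈ Finset.Icc 1 (n + 1) ∧ q.1 ≠ q.2.1 ∧
       IsMut n R S q.1 q.2.1 q.2.2.1 q.2.2.2}

/-- The segment `[a,b]^i` is a connected component of `Q_S`. -/
def IsCompQ (n : ℕ) (R S : ℕ → Finset ℕ) (i a b : ℕ) : Prop :=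
  i ∈ Finset.Icc 1 (n + 1) ∧ 1 ≤ a ∧ a ≤ b ∧ b ≤ n ∧
  (∀ t, a ≤ t → t ≤ b → i ∈ S t) ∧ (∀ t, a ≤ t → t ≤ b - 1 → i ∉ R t) ∧
  (a = 1 ∨ i ∉ S (a - 1) ∨ i ∈ R (a - 1)) ∧
  (b = n ∨ i ∉ S (b + 1) ∨ i ∈ R b)

/-- The segment `[a,b]^j` is a connected component of the complement of `Q_S`. -/
def IsCompC (n : ℕ) (R S : ℕ → Finset ℕ) (j a b : ℕ) : Prop :=
  j ∈ Finset.Icc 1 (n + 1) ∧ 1 ≤ a ∧ a ≤ b ∧ b ≤ n ∧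
  (∀ t, a ≤ t → t ≤ b → j ∉ S t) ∧ (∀ t, a ≤ t → t ≤ b - 1 → j ∉ R t) ∧
  (a = 1 ∨ j ∈ S (a - 1) ∨ j ∈ R (a - 1)) ∧
  (b = n ∨ j ∈ S (b + 1) ∨ j ∈ R b)

lemma compQ_unique {n : ℕ} {R S : ℕ → Finset ℕ} {i a e1 e2 : ℕ}
    (h1 : IsCompQ n R S i a e1) (h2 : IsCompQ n R S i a e2) : e1 = e2 := by
  obtain ⟨_, ha1, hab1, hbn1, hS1, hR1, _, hright1⟩ := h1
  obtain ⟨_, ha2, hab2, hbn2, hS2, hR2, _, hright2⟩ := h2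
  by_contra hne
  rcases Nat.lt_or_ge e1 e2 with h | h
  · have hSnew : i ∈ S (e1 + 1) := hS2 _ (by omega) (by omega)
    have hRnew : i ∉ R e1 := hR2 _ (by omega) (by omega)
    rcases hright1 with h' | h' | h'
    · omega
    · exact h' hSnew
    · exact hRnew h'
  · have h' : e2 < e1 := by omega
    have hSnew : i ∈ S (e2 + 1) := hS1 _ (by omega) (by omega)
    have hRnew : i ∉ R e2 := hR1 _ (by omega) (by omega)
    rcases hright2 with h'' | h'' | h''
    · omega
    · exact h'' hSnew
    · exact hRnew h''

lemma compC_unique {n : ℕ} {R S : ℕ → Finset ℕ} {j a1 a2 b : ℕ}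
    (h1 : IsCompC n R S j a1 b) (h2 : IsCompC n R S j a2 b) : a1 = a2 := by
  obtain ⟨_, ha1, hab1, hbn1, hS1, hR1, hleft1, _⟩ := h1
  obtain ⟨_, ha2, hab2, hbn2, hS2, hR2, hleft2, _⟩ := h2
  by_contra hne
  rcases Nat.lt_or_ge a1 a2 with h | h
  · have hSnew : j ∉ S (a2 - 1) := hS1 _ (by omega) (by omega)
    have hRnew : j ∉ R (a2 - 1) := hR1 _ (by omega) (by omega)
    rcases hleft2 with h' | h' | h'
    · omega
    · exact hSnew h'
    · exact hRnew h'
  · have h' : a2 < a1 := by omega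
    have hSnew : j ∉ S (a1 - 1) := hS2 _ (by omega) (by omega)
    have hRnew : j ∉ R (a1 - 1) := hR2 _ (by omega) (by omega)
    rcases hleft1 with h'' | h'' | h''
    · omega
    · exact hSnew h''
    · exact hRnew h''

lemma existsCompQ {n : ℕ} {R S : ℕ → Finset ℕ} {i a b : ℕ}
    (hi : i ∈ Finset.Icc 1 (n + 1)) (ha : 1 ≤ a) (hab : a ≤ b) (hbn : b ≤ n)
    (hS : ∀ t, a ≤ t → t ≤ b → i ∈ S t) (hR : ∀ t, a ≤ t → t ≤ b - 1 → i ∉ R t)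
    (hleft : a = 1 ∨ i ∉ S (a - 1) ∨ i ∈ R (a - 1)) :
    ∃ e, b ≤ e ∧ IsCompQ n R S i a e := by
  classical
  set P : ℕ → Prop := fun e =>
    b ≤ e ∧ (∀ t, a ≤ t → t ≤ e → i ∈ S t) ∧ (∀ t, a ≤ t → t ≤ e - 1 → i ∉ R t) with hP
  have hPb : P b := ⟨le_refl b, hS, hR⟩
  set e := Nat.findGreatest P n with he
  have hPe : P e := Nat.findGreatest_spec hbn hPb
  have hen : e ≤ n := Nat.findGreatest_le n
  have hright : e = n ∨ i ∉ S (e + 1) ∨ i ∈ R e := by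
    rcases eq_or_lt_of_le hen with h | h
    · exact Or.inl h
    · right
      by_contra hc
      push_neg at hc
      have hnP : ¬ P (e + 1) :=
        Nat.findGreatest_is_greatest (n := n) (by omega) (by omega)
      apply hnP
      refine ⟨by omega, fun t ht1 ht2 => ?_, fun t ht1 ht2 => ?_⟩
      · rcases eq_or_lt_of_le ht2 with h' | h'
        · rw [h']; exact hc.1
        · exact hPe.2.1 t ht1 (by omega)
      · rcases eq_or_lt_of_le ht2 with h' | h'
        · have : t = e := by omega
          rw [this]; exact hc.2
        · exact hPe.2.2 t ht1 (by omega)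
  exact ⟨e, hPe.1, hi, ha, le_trans hab hPe.1, hen, hPe.2.1, hPe.2.2, hleft, hright⟩

lemma existsCompC {n : ℕ} {R S : ℕ → Finset ℕ} {j a b : ℕ}
    (hj : j ∈ Finset.Icc 1 (n + 1)) (ha : 1 ≤ a) (hab : a ≤ b) (hbn : b ≤ n)
    (hS : ∀ t, a ≤ t → t ≤ b → j ∉ S t) (hR : ∀ t, a ≤ t → t ≤ b - 1 → j ∉ R t)
    (hright : b = n ∨ j ∈ S (b + 1) ∨ j ∈ R b) :
    ∃ a', a' ≤ a ∧ IsCompC n R S j a' b := by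
  classical
  set Q : ℕ → Prop := fun m =>
    1 ≤ m ∧ m ≤ a ∧ (∀ t, m ≤ t → t ≤ b → j ∉ S t) ∧ (∀ t, m ≤ t → t ≤ b - 1 → j ∉ R t)
    with hQdef
  have hex : ∃ m, Q m := ⟨a, ha, le_refl a, hS, hR⟩
  set a' := Nat.find hex with ha'
  have hQ : Q a' := Nat.find_spec hex
  have ha'a : a' ≤ a := Nat.find_le ⟨ha, le_refl a, hS, hR⟩
  have hleft : a' = 1 ∨ j ∈ S (a' - 1) ∨ j ∈ R (a' - 1) := by
    rcases eq_or_lt_of_le hQ.1 with h | h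
    · exact Or.inl h.symm
    · right
      by_contra hc
      push_neg at hc
      have hnQ : ¬ Q (a' - 1) := Nat.find_min hex (by omega)
      apply hnQ
      refine ⟨by omega, by omega, fun t ht1 ht2 => ?_, fun t ht1 ht2 => ?_⟩
      · rcases eq_or_lt_of_le ht1 with h' | h'
        · rw [← h']; exact hc.1
        · exact hQ.2.2.1 t (by omega) ht2
      · rcases eq_or_lt_of_le ht1 with h' | h'
        · rw [← h']; exact hc.2
        · exact hQ.2.2.2 t (by omega) ht2
  exact ⟨a', ha'a, hj, hQ.1, le_trans ha'a hab, hbn, hQ.2.2.1, hQ.2.2.2, hleft, hright⟩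

/-- `|Mut(S)|` equals the number of pairs `(C, D)` where `C = [a,e]^i` is a
connected component of `Q_S`, `D = [a',b']^j` is a connected component of the complement,
and `a' ≤ a ≤ b' ≤ e`. -/
theorem mut_card_eq_hom_pairs (n : ℕ) (hn : 1 ≤ n) (R S : ℕ → Finset ℕ)
    (hadm : RAdmissible n R S) :
    (Mut n R S).ncard =
      {q : (ℕ × ℕ × ℕ) × (ℕ × ℕ × ℕ) |
        IsCompQ n R S q.1.1 q.1.2.1 q.1.2.2 ∧ IsCompC n R S q.2.1 q.2.2.1 q.2.2.2 ∧
        q.2.2.1 ≤ q.1.2.1 ∧ q.1.2.1 ≤ q.2.2.2 ∧ q.2.2.2 ≤ q.1.2.2}.ncard := by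
  classical
  set B := {q : (ℕ × ℕ × ℕ) × (ℕ × ℕ × ℕ) |
        IsCompQ n R S q.1.1 q.1.2.1 q.1.2.2 ∧ IsCompC n R S q.2.1 q.2.2.1 q.2.2.2 ∧
        q.2.2.1 ≤ q.1.2.1 ∧ q.1.2.1 ≤ q.2.2.2 ∧ q.2.2.2 ≤ q.1.2.2} with hB
  set f : (ℕ × ℕ × ℕ) × (ℕ × ℕ × ℕ) → ℕ × ℕ × ℕ × ℕ :=
    fun q => (q.1.1, q.2.1, q.1.2.1, q.2.2.2) with hf
  have himg : f '' B = Mut n R S := by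
    ext q
    obtain ⟨i, j, a, b⟩ := q
    constructor
    · rintro ⟨⟨⟨i1, a1, e1⟩, ⟨j1, a1', b1⟩⟩, hmem, heq⟩
      simp only [hf, Prod.mk.injEq] at heq
      obtain ⟨rfl, rfl, rfl, rfl⟩ := heq
      simp only [hB, Set.mem_setOf_eq] at hmem
      obtain ⟨hC, hD, h1, h2, h3⟩ := hmem
      obtain ⟨hiIcc, haQ, haeQ, henQ, hSQ, hRQ, hleftQ, hrightQ⟩ := hC
      obtain ⟨hjIcc, ha'C, ha'bC, hbnC, hSC, hRC, hleftC, hrightC⟩ := hD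
      simp only [Mut, IsMut, Set.mem_setOf_eq]
      refine ⟨hiIcc, hjIcc, ?_, haQ, h2, hbnC, fun t ht1 ht2 => hSQ t ht1 (by omega),
        fun t ht1 ht2 => hRQ t ht1 (by omega), hleftQ,
        fun t ht1 ht2 => hSC t (by omega) ht2, fun t ht1 ht2 => hRC t (by omega) ht2,
        hrightC⟩
      intro hij
      exact hSC _ (by omega) (by omega) (hij ▸ hSQ _ le_rfl haeQ)
    · rintro ⟨hi, hj, hij, ha, hab, hbn, hSi, hRi, hlefti, hSj, hRj, hrightj⟩
      obtain ⟨e, hbe, hCQ⟩ := existsCompQ hi ha hab hbn hSi hRi hlefti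
      obtain ⟨a', ha'a, hCC⟩ := existsCompC hj ha hab hbn hSj hRj hrightj
      exact ⟨((i, a, e), (j, a', b)), ⟨hCQ, hCC, ha'a, hab, hbe⟩, rfl⟩
  have hinj : Set.InjOn f B := by
    rintro ⟨⟨i1, a1, e1⟩, ⟨j1, a1', b1⟩⟩ hq1 ⟨⟨i2, a2, e2⟩, ⟨j2, a2', b2⟩⟩ hq2 heq
    simp only [hf, Prod.mk.injEq] at heq
    obtain ⟨rfl, rfl, rfl, rfl⟩ := heq
    simp only [hB, Set.mem_setOf_eq] at hq1 hq2
    obtain ⟨hC1, hD1, -⟩ := hq1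
    obtain ⟨hC2, hD2, -⟩ := hq2
    have he : e1 = e2 := compQ_unique hC1 hC2
    have ha' : a1' = a2' := compC_unique hD1 hD2
    simp [he, ha']
  rw [← himg, Set.ncard_image_of_injOn hinj]
end

section
/- Let n ≥ 1, let R = (R_1, …, R_{n−1}) be a family of subsets of {1, …, n+1}, and let S be an R-admissible sequence. Then |Sing(S)| equals the number of pairs (C, D) where C = [k,h]^i is a connected component of Q_S, D = [a,b]^j is a connected component of the complement, and k+1 ≤ a ≤ h+1 ≤ b. -/
/-- `Sing(S)`: the disjoint union of the `Sing_i(S)`, as triples `(i, j, h+1)`. -/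
def Sing (n : ℕ) (R S : ℕ → Finset ℕ) : Set (ℕ × ℕ × ℕ) :=
  {p | p.1 ∈ Finset.Icc 1 (n + 1) ∧ ∃ h, p.2.2 = h + 1 ∧ SingCond n R S p.1 p.2.1 h}

/-- Uniqueness of "components": two maximal intervals sharing a point coincide. -/
lemma comp_unique {A B : ℕ → Prop} {n a b a' b' t : ℕ}
    (hb : b ≤ n) (hb' : b' ≤ n) (ha : 1 ≤ a) (ha' : 1 ≤ a')
    (hA : ∀ u, a ≤ u → u ≤ b → A u) (hB : ∀ u, a ≤ u → u ≤ b - 1 → ¬ B u)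
    (hA' : ∀ u, a' ≤ u → u ≤ b' → A u) (hB' : ∀ u, a' ≤ u → u ≤ b' - 1 → ¬ B u)
    (hl : a = 1 ∨ ¬ A (a - 1) ∨ B (a - 1)) (hl' : a' = 1 ∨ ¬ A (a' - 1) ∨ B (a' - 1))
    (hr : b = n ∨ ¬ A (b + 1) ∨ B b) (hr' : b' = n ∨ ¬ A (b' + 1) ∨ B b')
    (ht1 : a ≤ t) (ht2 : t ≤ b) (ht3 : a' ≤ t) (ht4 : t ≤ b') :
    a = a' ∧ b = b' := by
  have key : ∀ a b a' : ℕ, 1 ≤ a →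
      (∀ u, a ≤ u → u ≤ b → A u) → (∀ u, a ≤ u → u ≤ b - 1 → ¬ B u) →
      (a' = 1 ∨ ¬ A (a' - 1) ∨ B (a' - 1)) →
      a ≤ t → t ≤ b → a' ≤ t → a' ≤ a := by
    intro a b a' ha hA hB hl' ht1 ht2 ht3
    by_contra hc
    push_neg at hc
    have h1 : A (a' - 1) := hA _ (by omega) (by omega)
    have h2 : ¬ B (a' - 1) := hB _ (by omega) (by omega)
    rcases hl' with h | h | h
    · omega
    · exact h h1
    · exact h2 h
  have keyr : ∀ a b b' : ℕ, b ≤ n →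
      (∀ u, a ≤ u → u ≤ b → A u) → (∀ u, a ≤ u → u ≤ b - 1 → ¬ B u) →
      (b' = n ∨ ¬ A (b' + 1) ∨ B b') →
      a ≤ t → t ≤ b → t ≤ b' → b ≤ b' := by
    intro a b b' hbn hA hB hr' ht1 ht2 ht4
    by_contra hc
    push_neg at hc
    have h1 : A (b' + 1) := hA _ (by omega) (by omega)
    have h2 : ¬ B b' := hB _ (by omega) (by omega)
    rcases hr' with h | h | h
    · omega
    · exact h h1
    · exact h2 h
  exact ⟨le_antisymm (key a' b' a ha' hA' hB' hl ht3 ht4 ht1)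
      (key a b a' ha hA hB hl' ht1 ht2 ht3),
    le_antisymm (keyr a b b' hb hA hB hr' ht1 ht2 ht4)
      (keyr a' b' b hb' hA' hB' hr ht3 ht4 ht2)⟩


/-- `|Sing(S)|` equals the number of pairs `(C, D)` where `C = [k,h]^i` is a
connected component of `Q_S`, `D = [a,b]^j` is a connected component of the complement,
and `k+1 ≤ a ≤ h+1 ≤ b`. -/
theorem sing_card_eq_ext_pairs (n : ℕ) (hn : 1 ≤ n) (R S : ℕ → Finset ℕ)
    (hadm : RAdmissible n R S) :
    (Sing n R S).ncard =
      {q : (ℕ × ℕ × ℕ) × (ℕ × ℕ × ℕ) |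
        IsCompQ n R S q.1.1 q.1.2.1 q.1.2.2 ∧ IsCompC n R S q.2.1 q.2.2.1 q.2.2.2 ∧
        q.1.2.1 + 1 ≤ q.2.2.1 ∧ q.2.2.1 ≤ q.1.2.2 + 1 ∧ q.1.2.2 + 1 ≤ q.2.2.2}.ncard := by
  classical
  obtain ⟨hR, hScard, hsub⟩ := hadm
  set T : Set ((ℕ × ℕ × ℕ) × (ℕ × ℕ × ℕ)) :=
    {q | IsCompQ n R S q.1.1 q.1.2.1 q.1.2.2 ∧ IsCompC n R S q.2.1 q.2.2.1 q.2.2.2 ∧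
        q.1.2.1 + 1 ≤ q.2.2.1 ∧ q.2.2.1 ≤ q.1.2.2 + 1 ∧ q.1.2.2 + 1 ≤ q.2.2.2} with hT
  set g : (ℕ × ℕ × ℕ) × (ℕ × ℕ × ℕ) → ℕ × ℕ × ℕ :=
    fun q => (q.1.1, q.2.1, q.1.2.2 + 1) with hg
  have hinj : Set.InjOn g T := by
    rintro ⟨⟨i, k, h⟩, ⟨j, a, b⟩⟩ hq ⟨⟨i', k', h'⟩, ⟨j', a', b'⟩⟩ hq' heq
    obtain ⟨hq1, hq2, hq3, hq4, hq5⟩ := hq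
    obtain ⟨hq1', hq2', hq3', hq4', hq5'⟩ := hq'
    replace hq1 : IsCompQ n R S i k h := hq1
    replace hq2 : IsCompC n R S j a b := hq2
    replace hq3 : k + 1 ≤ a := hq3
    replace hq4 : a ≤ h + 1 := hq4
    replace hq5 : h + 1 ≤ b := hq5
    replace hq1' : IsCompQ n R S i' k' h' := hq1'
    replace hq2' : IsCompC n R S j' a' b' := hq2'
    replace hq3' : k' + 1 ≤ a' := hq3'
    replace hq4' : a' ≤ h' + 1 := hq4'
    replace hq5' : h' + 1 ≤ b' := hq5'
    have heq' : (i, j, h + 1) = (i', j', h' + 1) := heq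
    simp only [Prod.mk.injEq] at heq'
    obtain ⟨hii, hjj, hhh⟩ := heq'
    subst hii; subst hjj
    have hhh' : h = h' := by omega
    subst hhh'
    obtain ⟨_, hk1, hkh, hhn, hiS, hiR, hl, hr⟩ := hq1
    obtain ⟨_, ha1, hab, hbn, hjS, hjR, hl2, hr2⟩ := hq2
    obtain ⟨_, hk1', hkh', hhn', hiS', hiR', hl', hr'⟩ := hq1'
    obtain ⟨_, ha1', hab', hbn', hjS', hjR', hl2', hr2'⟩ := hq2'
    have e1 : k = k' ∧ h = h :=
      comp_unique (A := fun u => i ∈ S u) (B := fun u => i ∈ R u)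
        hhn hhn' hk1 hk1' hiS hiR hiS' hiR' hl hl' hr hr' (t := h) hkh le_rfl hkh' le_rfl
    have e2 : a = a' ∧ b = b' :=
      comp_unique (A := fun u => j ∉ S u) (B := fun u => j ∈ R u)
        hbn hbn' ha1 ha1' hjS hjR hjS' hjR'
        (hl2.imp id (Or.imp not_not_intro id)) (hl2'.imp id (Or.imp not_not_intro id))
        (hr2.imp id (Or.imp not_not_intro id)) (hr2'.imp id (Or.imp not_not_intro id))
        (t := h + 1) (by omega) hq5 (by omega) hq5'
    obtain rfl : k = k' := e1.1
    obtain rfl : a = a' := e2.1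
    obtain rfl : b = b' := e2.2
    rfl
  have key : Sing n R S = g '' T := by
    ext ⟨i, j, m⟩
    constructor
    · rintro ⟨hi, h, rfl, hh, hiRh, hjSh, k, hkh, hk, hjRk, hiS, hiRn⟩
      simp only [Finset.mem_Icc] at hh hk
      -- left endpoint of the Q-component of i ending at h
      have hex1 : ∃ m, 1 ≤ m ∧ (∀ t, m ≤ t → t ≤ h → i ∈ S t) ∧
          (∀ t, m ≤ t → t ≤ h - 1 → i ∉ R t) := ⟨k, hk.1, hiS, hiRn⟩
      set k₀ := Nat.find hex1 with hk₀def
      obtain ⟨hk₀1, hk₀S, hk₀R⟩ := Nat.find_spec hex1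
      have hk₀k : k₀ ≤ k := Nat.find_min' hex1 ⟨hk.1, hiS, hiRn⟩
      have hleft : k₀ = 1 ∨ i ∉ S (k₀ - 1) ∨ i ∈ R (k₀ - 1) := by
        by_contra hcon
        push_neg at hcon
        obtain ⟨h1, h2, h3⟩ := hcon
        have hmin := Nat.find_min hex1 (m := k₀ - 1) (by omega)
        apply hmin
        refine ⟨by omega, ?_, ?_⟩
        · intro t ht1 ht2
          rcases Nat.lt_or_ge t k₀ with h' | h'
          · have : t = k₀ - 1 := by omega
            rwa [this]
          · exact hk₀S t h' ht2
        · intro t ht1 ht2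
          rcases Nat.lt_or_ge t k₀ with h' | h'
          · have : t = k₀ - 1 := by omega
            rwa [this]
          · exact hk₀R t h' ht2
      -- right endpoint b of the complement component of j containing h+1
      set Pb : ℕ → Prop := fun m => h + 1 ≤ m ∧ (∀ t, h + 1 ≤ t → t ≤ m → j ∉ S t) ∧
        (∀ t, h + 1 ≤ t → t ≤ m - 1 → j ∉ R t) with hPbdef
      have hPbh1 : Pb (h + 1) := by
        refine ⟨le_rfl, ?_, ?_⟩
        · intro t ht1 ht2
          have : t = h + 1 := by omega
          rwa [this]
        · intro t ht1 ht2
          omega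
      have hh1n : h + 1 ≤ n := by omega
      set b := Nat.findGreatest Pb n with hbdef
      have hPbb : Pb b := Nat.findGreatest_spec hh1n hPbh1
      have hbn : b ≤ n := Nat.findGreatest_le n
      have hh1b : h + 1 ≤ b := Nat.le_findGreatest hh1n hPbh1
      have hright : b = n ∨ j ∈ S (b + 1) ∨ j ∈ R b := by
        by_contra hcon
        push_neg at hcon
        obtain ⟨h1, h2, h3⟩ := hcon
        have hmax := Nat.findGreatest_is_greatest (P := Pb) (n := n) (k := b + 1)
          (by omega) (by omega)
        apply hmax
        refine ⟨by omega, ?_, ?_⟩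
        · intro t ht1 ht2
          rcases Nat.lt_or_ge t (b + 1) with h' | h'
          · exact hPbb.2.1 t ht1 (by omega)
          · have : t = b + 1 := by omega
            rwa [this]
        · intro t ht1 ht2
          rcases Nat.lt_or_ge t b with h' | h'
          · exact hPbb.2.2 t ht1 (by omega)
          · have : t = b := by omega
            rwa [this]
      -- left endpoint a of the complement component of j containing h+1
      have hw2 : 1 ≤ h + 1 ∧ (∀ t, h + 1 ≤ t → t ≤ h + 1 → j ∉ S t) ∧
          (∀ t, h + 1 ≤ t → t ≤ h → j ∉ R t) := by
        refine ⟨by omega, ?_, ?_⟩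
        · intro t ht1 ht2
          have : t = h + 1 := by omega
          rwa [this]
        · intro t ht1 ht2
          omega
      have hex2 : ∃ m, 1 ≤ m ∧ (∀ t, m ≤ t → t ≤ h + 1 → j ∉ S t) ∧
          (∀ t, m ≤ t → t ≤ h → j ∉ R t) := ⟨h + 1, hw2⟩
      set a := Nat.find hex2 with hadef
      obtain ⟨ha1, haS, haR⟩ := Nat.find_spec hex2
      have hah1 : a ≤ h + 1 := Nat.find_min' hex2 hw2
      have hleft2 : a = 1 ∨ j ∈ S (a - 1) ∨ j ∈ R (a - 1) := by
        by_contra hcon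
        push_neg at hcon
        obtain ⟨h1, h2, h3⟩ := hcon
        have hmin := Nat.find_min hex2 (m := a - 1) (by omega)
        apply hmin
        refine ⟨by omega, ?_, ?_⟩
        · intro t ht1 ht2
          rcases Nat.lt_or_ge t a with h' | h'
          · have : t = a - 1 := by omega
            rwa [this]
          · exact haS t h' ht2
        · intro t ht1 ht2
          rcases Nat.lt_or_ge t a with h' | h'
          · have : t = a - 1 := by omega
            rwa [this]
          · exact haR t h' ht2
      have hak : k < a := by
        by_contra hcon
        push_neg at hcon
        exact haR k hcon hkh hjRk
      have hQ : IsCompQ n R S i k₀ h :=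
        ⟨hi, hk₀1, by omega, by omega, hk₀S, hk₀R, hleft, Or.inr (Or.inr hiRh)⟩
      have hC : IsCompC n R S j a b := by
        refine ⟨hR k hk.1 hk.2 hjRk, ha1, by omega, hbn, ?_, ?_, hleft2, hright⟩
        · intro t ht1 ht2
          rcases le_or_gt t (h + 1) with h' | h'
          · exact haS t ht1 h'
          · exact hPbb.2.1 t (by omega) ht2
        · intro t ht1 ht2
          rcases le_or_gt t h with h' | h'
          · exact haR t ht1 h'
          · exact hPbb.2.2 t (by omega) ht2
      exact ⟨((i, k₀, h), (j, a, b)), ⟨hQ, hC, show k₀ + 1 ≤ a by omega,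
        show a ≤ h + 1 by omega, show h + 1 ≤ b by omega⟩, rfl⟩
    · rintro ⟨⟨⟨i', k₀, h⟩, ⟨j', a, b⟩⟩, ⟨hCQ, hCC, hc1, hc2, hc3⟩, heq⟩
      have heq' : (i', j', h + 1) = (i, j, m) := heq
      simp only [Prod.mk.injEq] at heq'
      obtain ⟨rfl, rfl, rfl⟩ := heq'
      replace hCQ : IsCompQ n R S i' k₀ h := hCQ
      replace hCC : IsCompC n R S j' a b := hCC
      replace hc1 : k₀ + 1 ≤ a := hc1
      replace hc2 : a ≤ h + 1 := hc2
      replace hc3 : h + 1 ≤ b := hc3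
      obtain ⟨hi, hk1, hkh, hhn, hiS, hiRn, _, hr⟩ := hCQ
      obtain ⟨hj, ha1, hab, hbn, hjS, hjR, hl2, _⟩ := hCC
      have hhn1 : h ≤ n - 1 := by omega
      have hiSh : i' ∈ S h := hiS h hkh le_rfl
      have hiRh : i' ∈ R h := by
        rcases hr with h' | h' | h'
        · omega
        · have := hsub h (by omega) hhn1 hiSh
          rcases Finset.mem_union.mp this with h'' | h''
          · exact absurd h'' h'
          · exact h''
        · exact h'
      have hjSh1 : j' ∉ S (h + 1) := hjS (h + 1) hc2 hc3
      have hjRa : j' ∈ R (a - 1) := by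
        rcases hl2 with h' | h' | h'
        · omega
        · have hja : j' ∉ S a := hjS a le_rfl hab
          have hsub' := hsub (a - 1) (by omega) (by omega)
          have heq2 : a - 1 + 1 = a := by omega
          rw [heq2] at hsub'
          rcases Finset.mem_union.mp (hsub' h') with h'' | h''
          · exact absurd h'' hja
          · exact h''
        · exact h'
      exact ⟨hi, h, rfl, Finset.mem_Icc.mpr ⟨by omega, hhn1⟩, hiRh, hjSh1,
        a - 1, by omega, Finset.mem_Icc.mpr ⟨by omega, by omega⟩, hjRa,
        fun t ht1 ht2 => hiS t (by omega) ht2,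
        fun t ht1 ht2 => hiRn t (by omega) ht2⟩
  rw [key, Set.ncard_image_of_injOn hinj]
end

section
/- Let n ≥ 1, let R = (R_1, …, R_{n−1}) be a family of subsets of {1, …, n+1}, and let S be an R-admissible sequence. Let H be the number of pairs (C, D), with C = [a,e]^i a connected component of Q_S and D = [a′,b′]^j a connected component of the complement, satisfying a′ ≤ a ≤ b′ ≤ e, and let E be the number of such pairs satisfying a+1 ≤ a′ ≤ e+1 ≤ b′. Then H − E = n(n+1)/2. -/
/-!
Fix a component `D = [a', b']` of the complement of `Q_S`. The components of `Q_S` paired with `D`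
in `H` are the components through `b'` that start at or after `a'`; those paired with `D` in `E`
are the components through `a' - 1` that end before `b'`. In both cases the remaining components
through the time in question are those containing both `a' - 1` and `b'`. Every `i ∈ S_t` lies in
exactly one component through `t`, so there are `|S_t| = t` of them, and `D` contributes
`b' - (a' - 1)`, its length, to `H - E`. The lengths of the components of the complement add up to
the number of pairs `(t, j)` with `j ∉ S_t`, which is `∑ₜ (n + 1 - t) = n (n + 1) / 2`.
-/

open Finset

theorem sum_Icc_succ_sub (n : ℕ) : ∑ t ∈ Icc 1 n, (n + 1 - t) = n * (n + 1) / 2 := by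
  have reflect : ∑ t ∈ Icc 1 n, (n + 1 - t) = ∑ t ∈ Icc 1 n, t := by
    have := sum_Ico_reflect (fun t => t) 1 (m := n + 1) (n := n + 1) (by omega)
    simpa only [Nat.add_sub_cancel_left, Nat.add_sub_cancel, Ico_add_one_right_eq_Icc] using this
  have gauss := sum_range_id_mul_two (n + 1)
  rw [range_eq_Ico, sum_eq_sum_Ico_succ_bot (by omega)] at gauss
  simp only [zero_add, Nat.add_sub_cancel, Ico_add_one_right_eq_Icc] at gauss
  rw [reflect, Nat.mul_comm n]
  omega

theorem ncard_setOf_mem_prod {α β : Type*} (A : Finset α) (B : Finset β)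
    (r : α × β → Prop) [DecidablePred r] :
    {x : α × β | x.1 ∈ A ∧ x.2 ∈ B ∧ r x}.ncard = ∑ b ∈ B, #{a ∈ A | r (a, b)} := by
  have : {x : α × β | x.1 ∈ A ∧ x.2 ∈ B ∧ r x} = ↑{x ∈ A ×ˢ B | r x} := by
    ext x
    simp [and_assoc]
  rw [this, Set.ncard_coe_finset, card_filter, sum_product_right]
  simp only [card_filter]

/-- `cut u` separates the times `u` and `u + 1`. -/
def Linked (cut M : ℕ → Prop) (s t : ℕ) : Prop :=
  (∀ u, s ≤ u → u ≤ t → M u) ∧ ∀ u, s ≤ u → u < t → ¬ cut u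

structure IsRun (n : ℕ) (cut M : ℕ → Prop) (a b : ℕ) : Prop where
  one_le : 1 ≤ a
  le : a ≤ b
  le_n : b ≤ n
  linked : Linked cut M a b
  maximal_left : a = 1 ∨ ¬ M (a - 1) ∨ cut (a - 1)
  maximal_right : b = n ∨ ¬ M (b + 1) ∨ cut b

section Runs

variable {n : ℕ} {cut M : ℕ → Prop} {a b s t m : ℕ}

namespace Linked

theorem refl (h : M t) : Linked cut M t t :=
  ⟨fun u h₁ h₂ => le_antisymm h₂ h₁ ▸ h, fun _ h₁ h₂ => absurd h₂ (by omega)⟩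

theorem mono (h : Linked cut M s t) {s' t' : ℕ} (hs : s ≤ s') (ht : t' ≤ t) :
    Linked cut M s' t' :=
  ⟨fun u h₁ h₂ => h.1 u (hs.trans h₁) (h₂.trans ht),
    fun u h₁ h₂ => h.2 u (hs.trans h₁) (h₂.trans_le ht)⟩

theorem trans (h₁ : Linked cut M s t) (h₂ : Linked cut M t m) : Linked cut M s m := by
  refine ⟨fun u hs hm => ?_, fun u hs hm => ?_⟩
  · rcases le_total u t with hu | hu
    exacts [h₁.1 u hs hu, h₂.1 u hu hm]
  · rcases lt_or_ge u t with hu | hu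
    exacts [h₁.2 u hs hu, h₂.2 u hu hm]

theorem pred (h : Linked cut M s t) (hM : M (s - 1)) (hcut : ¬ cut (s - 1)) :
    Linked cut M (s - 1) t := by
  refine ⟨fun u h₁ h₂ => ?_, fun u h₁ h₂ => ?_⟩
  · rcases eq_or_ne u (s - 1) with rfl | hu
    exacts [hM, h.1 u (by omega) h₂]
  · rcases eq_or_ne u (s - 1) with rfl | hu
    exacts [hcut, h.2 u (by omega) h₂]

theorem succ (h : Linked cut M s t) (hM : M (t + 1)) (hcut : ¬ cut t) :
    Linked cut M s (t + 1) := by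
  refine ⟨fun u h₁ h₂ => ?_, fun u h₁ h₂ => ?_⟩
  · rcases eq_or_ne u (t + 1) with rfl | hu
    exacts [hM, h.1 u h₁ (by omega)]
  · rcases eq_or_ne u t with rfl | hu
    exacts [hcut, h.2 u h₁ (by omega)]

end Linked

namespace IsRun

theorem le_of_linked_to (hr : IsRun n cut M a b) (hat : a ≤ t) (hs : 1 ≤ s)
    (h : Linked cut M s t) : a ≤ s := by
  by_contra! hsa
  rcases hr.maximal_left with h₁ | h₁ | h₁
  · omega
  · exact h₁ (h.1 (a - 1) (by omega) (by omega))
  · exact h.2 (a - 1) (by omega) (by omega) h₁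

theorem le_of_linked_from (hr : IsRun n cut M a b) (htb : t ≤ b) (hm : m ≤ n)
    (h : Linked cut M t m) : m ≤ b := by
  by_contra! hbm
  rcases hr.maximal_right with h₁ | h₁ | h₁
  · omega
  · exact h₁ (h.1 (b + 1) (by omega) (by omega))
  · exact h.2 b (by omega) (by omega) h₁

theorem unique {a' b' : ℕ} (hr : IsRun n cut M a b) (hr' : IsRun n cut M a' b')
    (ht : a ≤ t ∧ t ≤ b) (ht' : a' ≤ t ∧ t ≤ b') : a = a' ∧ b = b' := by
  have h₁ := hr.le_of_linked_to ht.1 hr'.one_le (hr'.linked.mono le_rfl ht'.2)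
  have h₂ := hr'.le_of_linked_to ht'.1 hr.one_le (hr.linked.mono le_rfl ht.2)
  have h₃ := hr.le_of_linked_from ht.2 hr'.le_n (hr'.linked.mono ht'.1 le_rfl)
  have h₄ := hr'.le_of_linked_from ht'.2 hr.le_n (hr.linked.mono ht.1 le_rfl)
  omega

end IsRun

/-- The run through `t` starts at the least `s` linked to `t` and stops at the greatest `m ≤ n`
linked from `t`. -/
theorem exists_isRun (hM : M t) (ht : 1 ≤ t) (htn : t ≤ n) :
    ∃ a b, IsRun n cut M a b ∧ a ≤ t ∧ t ≤ b := by
  classical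
  have hex : ∃ s, 1 ≤ s ∧ s ≤ t ∧ Linked cut M s t := ⟨t, ht, le_rfl, .refl hM⟩
  let P m := t ≤ m ∧ Linked cut M t m
  have hPt : P t := ⟨le_rfl, .refl hM⟩
  obtain ⟨ha, hat, hlink_a⟩ := Nat.find_spec hex
  obtain ⟨htb, hlink_b⟩ : P (Nat.findGreatest P n) := Nat.findGreatest_spec htn hPt
  refine ⟨Nat.find hex, Nat.findGreatest P n, ⟨ha, hat.trans htb, Nat.findGreatest_le n,
    hlink_a.trans hlink_b, ?_, ?_⟩, hat, htb⟩
  · by_contra! h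
    have := Nat.find_min' hex (m := Nat.find hex - 1)
      ⟨by omega, by omega, hlink_a.pred h.2.1 h.2.2⟩
    omega
  · by_contra! h
    have := Nat.findGreatest_le (P := P) n
    have := Nat.le_findGreatest (P := P) (n := n) (m := Nat.findGreatest P n + 1) (by omega)
      ⟨by omega, hlink_b.succ h.2.1 h.2.2⟩
    omega

end Runs

open Classical in
/-- The runs `[a, b]` of the rows `i ∈ [1, N]`, recorded as triples `(i, a, b)`. -/
noncomputable def runs (n N : ℕ) (cut M : ℕ → ℕ → Prop) : Finset (ℕ × ℕ × ℕ) :=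
  {p ∈ Icc 1 N ×ˢ Icc 1 n ×ˢ Icc 1 n | IsRun n (cut p.1) (M p.1) p.2.1 p.2.2}

section RunsThrough

variable {n N t : ℕ} {cut M : ℕ → ℕ → Prop}

theorem mem_runs {p : ℕ × ℕ × ℕ} :
    p ∈ runs n N cut M ↔ p.1 ∈ Icc 1 N ∧ IsRun n (cut p.1) (M p.1) p.2.1 p.2.2 := by
  simp only [runs, mem_filter, mem_product, mem_Icc]
  constructor
  · rintro ⟨⟨hi, -⟩, hr⟩
    exact ⟨hi, hr⟩
  · rintro ⟨hi, hr⟩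
    have := hr.one_le; have := hr.le; have := hr.le_n
    exact ⟨⟨hi, by omega, by omega⟩, hr⟩

theorem card_runs_through [∀ i, Decidable (M i t)] (ht : 1 ≤ t) (htn : t ≤ n) :
    #{p ∈ runs n N cut M | p.2.1 ≤ t ∧ t ≤ p.2.2} = #{i ∈ Icc 1 N | M i t} := by
  refine card_bij (fun p _ => p.1) (fun p hp => ?_) (fun p hp q hq hpq => ?_) fun i hi => ?_
  · obtain ⟨hp, hat, htb⟩ := mem_filter.1 hp
    obtain ⟨hi, hr⟩ := mem_runs.1 hp
    exact mem_filter.2 ⟨hi, hr.linked.1 t hat htb⟩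
  · obtain ⟨hp, hpt⟩ := mem_filter.1 hp
    obtain ⟨hq, hqt⟩ := mem_filter.1 hq
    have hrp := (mem_runs.1 hp).2
    rw [hpq] at hrp
    obtain ⟨ha, hb⟩ := hrp.unique (mem_runs.1 hq).2 hpt hqt
    exact Prod.ext hpq (Prod.ext ha hb)
  · obtain ⟨hi, hM⟩ := mem_filter.1 hi
    obtain ⟨a, b, hr, hat, htb⟩ := exists_isRun (cut := cut i) hM ht htn
    exact ⟨(i, a, b), mem_filter.2 ⟨mem_runs.2 ⟨hi, hr⟩, hat, htb⟩, rfl⟩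

end RunsThrough

noncomputable def compQ (n : ℕ) (R S : ℕ → Finset ℕ) : Finset (ℕ × ℕ × ℕ) :=
  runs n (n + 1) (fun i t => i ∈ R t) (fun i t => i ∈ S t)

noncomputable def compC (n : ℕ) (R S : ℕ → Finset ℕ) : Finset (ℕ × ℕ × ℕ) :=
  runs n (n + 1) (fun i t => i ∈ R t) (fun i t => i ∉ S t)

section Components

variable {n : ℕ} {R S : ℕ → Finset ℕ}

theorem isRun_iff {cut M : ℕ → Prop} {a b : ℕ} :
    IsRun n cut M a b ↔ 1 ≤ a ∧ a ≤ b ∧ b ≤ n ∧ (∀ t, a ≤ t → t ≤ b → M t) ∧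
      (∀ t, a ≤ t → t ≤ b - 1 → ¬ cut t) ∧ (a = 1 ∨ ¬ M (a - 1) ∨ cut (a - 1)) ∧
      (b = n ∨ ¬ M (b + 1) ∨ cut b) := by
  constructor
  · rintro ⟨h₁, h₂, h₃, ⟨h₄, h₅⟩, h₆, h₇⟩
    exact ⟨h₁, h₂, h₃, h₄, fun t ha hb => h₅ t ha (by omega), h₆, h₇⟩
  · rintro ⟨h₁, h₂, h₃, h₄, h₅, h₆, h₇⟩
    exact ⟨h₁, h₂, h₃, ⟨h₄, fun t ha hb => h₅ t ha (by omega)⟩, h₆, h₇⟩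

theorem mem_compQ {p : ℕ × ℕ × ℕ} : p ∈ compQ n R S ↔ IsCompQ n R S p.1 p.2.1 p.2.2 := by
  rw [compQ, mem_runs, isRun_iff, IsCompQ]

theorem mem_compC {p : ℕ × ℕ × ℕ} : p ∈ compC n R S ↔ IsCompC n R S p.1 p.2.1 p.2.2 := by
  rw [compC, mem_runs, isRun_iff, IsCompC]
  simp only [not_not]

variable (hadm : RAdmissible n R S)
include hadm

theorem card_compQ_through {t : ℕ} (htn : t ≤ n) :
    #{C ∈ compQ n R S | C.2.1 ≤ t ∧ t ≤ C.2.2} = t := by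
  rcases Nat.eq_zero_or_pos t with rfl | ht
  · refine card_eq_zero.2 (filter_false_of_mem fun C hC h => ?_)
    have := (mem_runs.1 hC).2.one_le
    omega
  rw [compQ, card_runs_through ht htn, filter_mem_eq_inter,
    inter_eq_right.2 (hadm.2.1 t ht htn).1, (hadm.2.1 t ht htn).2]

theorem card_compC_through {t : ℕ} (ht : 1 ≤ t) (htn : t ≤ n) :
    #{D ∈ compC n R S | D.2.1 ≤ t ∧ t ≤ D.2.2} = n + 1 - t := by
  rw [compC, card_runs_through ht htn, filter_not, filter_mem_eq_inter,
    inter_eq_right.2 (hadm.2.1 t ht htn).1,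
    card_sdiff_of_subset (hadm.2.1 t ht htn).1, (hadm.2.1 t ht htn).2, Nat.card_Icc,
    Nat.add_sub_cancel]

theorem sum_length_compC :
    ∑ D ∈ compC n R S, (D.2.2 + 1 - D.2.1) = n * (n + 1) / 2 := by
  calc ∑ D ∈ compC n R S, (D.2.2 + 1 - D.2.1)
      = ∑ D ∈ compC n R S, #{t ∈ Icc 1 n | D.2.1 ≤ t ∧ t ≤ D.2.2} := by
        refine sum_congr rfl fun D hD => ?_
        have hr := (mem_runs.1 hD).2
        have : {t ∈ Icc 1 n | D.2.1 ≤ t ∧ t ≤ D.2.2} = Icc D.2.1 D.2.2 := by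
          ext t
          have := hr.one_le; have := hr.le_n
          simp only [mem_filter, mem_Icc]
          omega
        rw [this, Nat.card_Icc]
    _ = ∑ t ∈ Icc 1 n, #{D ∈ compC n R S | D.2.1 ≤ t ∧ t ≤ D.2.2} :=
        sum_card_bipartiteAbove_eq_sum_card_bipartiteBelow
          fun (D : ℕ × ℕ × ℕ) (t : ℕ) => D.2.1 ≤ t ∧ t ≤ D.2.2
    _ = ∑ t ∈ Icc 1 n, (n + 1 - t) := by
        refine sum_congr rfl fun t ht => ?_
        obtain ⟨ht₁, ht₂⟩ := mem_Icc.1 ht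
        exact card_compC_through hadm ht₁ ht₂
    _ = n * (n + 1) / 2 := sum_Icc_succ_sub n

theorem card_compQ_startIn_sub_card_compQ_endIn {a' b' : ℕ} (ha' : 1 ≤ a') (hab : a' ≤ b')
    (hbn : b' ≤ n) :
    (#{C ∈ compQ n R S | a' ≤ C.2.1 ∧ C.2.1 ≤ b' ∧ b' ≤ C.2.2} : ℤ) -
      #{C ∈ compQ n R S | C.2.1 + 1 ≤ a' ∧ a' ≤ C.2.2 + 1 ∧ C.2.2 + 1 ≤ b'} =
      (b' + 1 - a' : ℕ) := by
  set spanning := {C ∈ compQ n R S | C.2.1 < a' ∧ b' ≤ C.2.2}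
  have through_end :
      #{C ∈ compQ n R S | a' ≤ C.2.1 ∧ C.2.1 ≤ b' ∧ b' ≤ C.2.2} + #spanning = b' := by
    have h := card_filter_add_card_filter_not
      (s := {C ∈ compQ n R S | C.2.1 ≤ b' ∧ b' ≤ C.2.2}) (fun C => a' ≤ C.2.1)
    rw [filter_filter, filter_filter, card_compQ_through hadm hbn] at h
    rw [← h]
    congr 2 <;> exact filter_congr fun C _ => by omega
  have through_start :
      #{C ∈ compQ n R S | C.2.1 + 1 ≤ a' ∧ a' ≤ C.2.2 + 1 ∧ C.2.2 + 1 ≤ b'} + #spanning =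
        a' - 1 := by
    have h := card_filter_add_card_filter_not
      (s := {C ∈ compQ n R S | C.2.1 ≤ a' - 1 ∧ a' - 1 ≤ C.2.2}) (fun C => C.2.2 < b')
    rw [filter_filter, filter_filter, card_compQ_through hadm (by omega)] at h
    rw [← h]
    congr 2 <;> exact filter_congr fun C _ => by omega
  omega

end Components

theorem hom_sub_ext_eq_general (n : ℕ) (R S : ℕ → Finset ℕ)
    (hadm : RAdmissible n R S) :
    ({q : (ℕ × ℕ × ℕ) × (ℕ × ℕ × ℕ) |
        IsCompQ n R S q.1.1 q.1.2.1 q.1.2.2 ∧ IsCompC n R S q.2.1 q.2.2.1 q.2.2.2 ∧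
        q.2.2.1 ≤ q.1.2.1 ∧ q.1.2.1 ≤ q.2.2.2 ∧ q.2.2.2 ≤ q.1.2.2}.ncard : ℤ) -
      ({q : (ℕ × ℕ × ℕ) × (ℕ × ℕ × ℕ) |
        IsCompQ n R S q.1.1 q.1.2.1 q.1.2.2 ∧ IsCompC n R S q.2.1 q.2.2.1 q.2.2.2 ∧
        q.1.2.1 + 1 ≤ q.2.2.1 ∧ q.2.2.1 ≤ q.1.2.2 + 1 ∧ q.1.2.2 + 1 ≤ q.2.2.2}.ncard : ℤ) =
      (n * (n + 1) / 2 : ℕ) := by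
  simp only [← mem_compQ, ← mem_compC, ncard_setOf_mem_prod]
  rw [Nat.cast_sum, Nat.cast_sum, ← sum_sub_distrib, ← sum_length_compC hadm, Nat.cast_sum]
  refine sum_congr rfl fun D hD => ?_
  have hr := (mem_runs.1 hD).2
  exact card_compQ_startIn_sub_card_compQ_endIn hadm hr.one_le hr.le hr.le_n

/-- With `H` the number of pairs `(C, D)` (`C = [a,e]^i` a component of `Q_S`,
`D = [a',b']^j` a component of the complement) with `a' ≤ a ≤ b' ≤ e`, and `E` the number of
such pairs with `a+1 ≤ a' ≤ e+1 ≤ b'`, we have `H − E = n(n+1)/2`. -/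
theorem hom_sub_ext_eq (n : ℕ) (hn : 1 ≤ n) (R S : ℕ → Finset ℕ)
    (hadm : RAdmissible n R S) :
    ({q : (ℕ × ℕ × ℕ) × (ℕ × ℕ × ℕ) |
        IsCompQ n R S q.1.1 q.1.2.1 q.1.2.2 ∧ IsCompC n R S q.2.1 q.2.2.1 q.2.2.2 ∧
        q.2.2.1 ≤ q.1.2.1 ∧ q.1.2.1 ≤ q.2.2.2 ∧ q.2.2.2 ≤ q.1.2.2}.ncard : ℤ) -
      ({q : (ℕ × ℕ × ℕ) × (ℕ × ℕ × ℕ) |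
        IsCompQ n R S q.1.1 q.1.2.1 q.1.2.2 ∧ IsCompC n R S q.2.1 q.2.2.1 q.2.2.2 ∧
        q.1.2.1 + 1 ≤ q.2.2.1 ∧ q.2.2.1 ≤ q.1.2.2 + 1 ∧ q.1.2.2 + 1 ≤ q.2.2.2}.ncard : ℤ) =
      (n * (n + 1) / 2 : ℕ) :=
  hom_sub_ext_eq_general n R S hadm
end

section
/- Let n ≥ 1, let R = (R_1, …, R_{n−1}) be a family of subsets of {1, …, n+1}, and let S be an R-admissible sequence. Then |Mut(S)| = n(n+1)/2 + |Sing(S)|. -/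
/-!
Group the mutations `(i, j, (a, b))` by the pair `(j, b)`, which is then the right end of a maximal
gap `[c, b]` of row `j`: `j ∉ S_t` for `c ≤ t ≤ b` and `j ∉ R_t` for `c ≤ t < b`. The mutations
over this gap are the rows `i ∈ S_b` whose run through column `b` starts inside the gap, so there
are `b - |C|` of them, `C` being the rows of `S_{c-1}` whose run survives up to `b`. The cells
`(j, a)` with `j ∉ S_a`, of which there are `n(n+1)/2` because `|S_a| = a`, split along the same
gaps, `b - c + 1` per gap. Each of the other `c - 1 - |C|` rows `i` of `S_{c-1}` is released at a
first column `h < b`, and since `j ∈ R_{c-1}` this gives exactly one singular triple `(i, j, h + 1)`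
with `h + 1` in the gap.
-/

namespace AdmissibleSequence

open Finset

section Run

variable {R : ℕ → Finset ℕ} {x : ℕ} {P Q : ℕ → Prop} {a b c h h' : ℕ}

/-- Used with `P t := x ∈ S t` (a run of row `x`) and with `P t := x ∉ S t` (a gap of row `x`).
The bound `t ≤ b - 1` is the one of `IsMut`; it truncates at `b = 0`, hence `1 ≤ b` in
`isRun_self`. -/
def IsRun (R : ℕ → Finset ℕ) (x : ℕ) (P : ℕ → Prop) (a b : ℕ) : Prop :=
  (∀ t, a ≤ t → t ≤ b → P t) ∧ ∀ t, a ≤ t → t ≤ b - 1 → x ∉ R t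

theorem IsRun.mono (h : IsRun R x P a b) (hac : a ≤ c) : IsRun R x P c b :=
  ⟨fun t ht ht' => h.1 t (hac.trans ht) ht', fun t ht ht' => h.2 t (hac.trans ht) ht'⟩

theorem isRun_self (hb : 1 ≤ b) (hP : P b) : IsRun R x P b b :=
  ⟨fun t ht ht' => le_antisymm ht' ht ▸ hP, fun t ht ht' => by omega⟩

theorem IsRun.cons (h : IsRun R x P (a + 1) b) (hP : P a) (hR : x ∉ R a) : IsRun R x P a b := by
  refine ⟨fun t ht ht' => ?_, fun t ht ht' => ?_⟩
  · rcases ht.eq_or_lt with rfl | ht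
    exacts [hP, h.1 t ht ht']
  · rcases ht.eq_or_lt with rfl | ht
    exacts [hR, h.2 t ht ht']

theorem IsRun.snoc (h : IsRun R x P a b) (hR : x ∉ R b) (hP : P (b + 1)) :
    IsRun R x P a (b + 1) := by
  refine ⟨fun t ht ht' => ?_, fun t ht ht' => ?_⟩
  · rcases ht'.lt_or_eq with ht' | rfl
    exacts [h.1 t ht (Nat.lt_succ_iff.1 ht'), hP]
  · rcases (show t ≤ b by omega).lt_or_eq with ht' | rfl
    exacts [h.2 t ht (by omega), hR]

theorem IsRun.eq_of_mem (hrun : IsRun R x P a h) (hx : x ∈ R h) (hrun' : IsRun R x P a h')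
    (hx' : x ∈ R h') (ha : a ≤ h) (ha' : a ≤ h') : h = h' := by
  rcases lt_trichotomy h h' with hlt | heq | hgt
  · exact absurd hx (hrun'.2 h ha (by omega))
  · exact heq
  · exact absurd hx' (hrun.2 h' ha' (by omega))

theorem isRun_or_exists_stop (ha : 1 ≤ a) (hab : a ≤ b) (hPa : P a)
    (hext : ∀ t, a ≤ t → t < b → IsRun R x P a t → ¬Q t → x ∉ R t ∧ P (t + 1)) :
    IsRun R x P a b ∨ ∃ h, a ≤ h ∧ h < b ∧ IsRun R x P a h ∧ Q h := by
  induction b, hab using Nat.le_induction with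
  | base => exact Or.inl (isRun_self ha hPa)
  | succ m ham ih =>
    rcases ih fun t ht ht' => hext t ht (by omega) with hrun | ⟨h, hah, hhm, hrun, hQ⟩
    · by_cases hQ : Q m
      · exact Or.inr ⟨m, ham, by omega, hrun, hQ⟩
      · obtain ⟨hR, hP⟩ := hext m ham (by omega) hrun hQ
        exact Or.inl (hrun.snoc hR hP)
    · exact Or.inr ⟨h, hah, by omega, hrun, hQ⟩

/-- Junk value `0` unless `P b`. -/
noncomputable def runStart (R : ℕ → Finset ℕ) (x : ℕ) (P : ℕ → Prop) (b : ℕ) : ℕ :=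
  sInf {a | 1 ≤ a ∧ IsRun R x P a b}

theorem runStart_le (ha : 1 ≤ a) (h : IsRun R x P a b) : runStart R x P b ≤ a :=
  Nat.sInf_le ⟨ha, h⟩

theorem runStart_spec (hb : 1 ≤ b) (hP : P b) :
    1 ≤ runStart R x P b ∧ runStart R x P b ≤ b ∧ IsRun R x P (runStart R x P b) b := by
  have hmem : 1 ≤ runStart R x P b ∧ IsRun R x P (runStart R x P b) b :=
    Nat.sInf_mem (s := {a | 1 ≤ a ∧ IsRun R x P a b}) ⟨b, hb, isRun_self hb hP⟩
  exact ⟨hmem.1, runStart_le hb (isRun_self hb hP), hmem.2⟩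

theorem runStart_boundary (hb : 1 ≤ b) (hP : P b) (hs : 2 ≤ runStart R x P b) :
    ¬P (runStart R x P b - 1) ∨ x ∈ R (runStart R x P b - 1) := by
  obtain ⟨-, -, hrun⟩ := runStart_spec (R := R) (x := x) hb hP
  by_contra! hext
  rw [← Nat.sub_add_cancel (show 1 ≤ runStart R x P b by omega)] at hrun
  have := runStart_le (by omega) (hrun.cons hext.1 hext.2)
  omega

theorem runStart_eq_iff (ha : 1 ≤ a) (hab : a ≤ b) :
    P b ∧ runStart R x P b = a ↔ IsRun R x P a b ∧ (a = 1 ∨ ¬P (a - 1) ∨ x ∈ R (a - 1)) := by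
  constructor
  · rintro ⟨hP, rfl⟩
    obtain ⟨hs, -, hrun⟩ := runStart_spec (R := R) (x := x) (by omega) hP
    refine ⟨hrun, ?_⟩
    rcases Nat.lt_or_ge (runStart R x P b) 2 with hs' | hs'
    · exact Or.inl (by omega)
    · exact Or.inr (runStart_boundary (by omega) hP hs')
  · rintro ⟨hrun, hleft⟩
    have hP := hrun.1 b hab le_rfl
    refine ⟨hP, le_antisymm (runStart_le ha hrun) (not_lt.1 fun hlt => ?_)⟩
    obtain ⟨hs, -, hrun'⟩ := runStart_spec (R := R) (x := x) (by omega) hP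
    rcases hleft with rfl | hP' | hR
    · omega
    · exact hP' (hrun'.1 _ (by omega) (by omega))
    · exact hrun'.2 _ (by omega) (by omega) hR

end Run

section Gap

variable {n : ℕ} {R S : ℕ → Finset ℕ} {i j a b t : ℕ}

noncomputable abbrev rowStart (R S : ℕ → Finset ℕ) (i b : ℕ) : ℕ := runStart R i (i ∈ S ·) b

noncomputable abbrev gapStart (R S : ℕ → Finset ℕ) (j b : ℕ) : ℕ := runStart R j (j ∉ S ·) b

def GapCloses (n : ℕ) (R S : ℕ → Finset ℕ) (j b : ℕ) : Prop :=
  b = n ∨ j ∈ S (b + 1) ∨ j ∈ R b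

def IsGapEnd (n : ℕ) (R S : ℕ → Finset ℕ) (j b : ℕ) : Prop :=
  j ∉ S b ∧ GapCloses n R S j b

noncomputable def gapEnd (n : ℕ) (R S : ℕ → Finset ℕ) (j a : ℕ) : ℕ :=
  sInf {e | a ≤ e ∧ GapCloses n R S j e}

theorem gapEnd_le (hab : a ≤ b) (hb : GapCloses n R S j b) : gapEnd n R S j a ≤ b :=
  Nat.sInf_le ⟨hab, hb⟩

theorem gapEnd_spec (ha : 1 ≤ a) (han : a ≤ n) (hj : j ∉ S a) :
    a ≤ gapEnd n R S j a ∧ gapEnd n R S j a ≤ n ∧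
      IsRun R j (j ∉ S ·) a (gapEnd n R S j a) ∧ GapCloses n R S j (gapEnd n R S j a) := by
  have hmem : a ≤ gapEnd n R S j a ∧ GapCloses n R S j (gapEnd n R S j a) :=
    Nat.sInf_mem (s := {e | a ≤ e ∧ GapCloses n R S j e}) ⟨n, han, Or.inl rfl⟩
  refine ⟨hmem.1, gapEnd_le han (Or.inl rfl), ?_, hmem.2⟩
  refine (isRun_or_exists_stop (Q := GapCloses n R S j) ha hmem.1 hj ?_).resolve_right ?_
  · intro t _ _ _ hQ
    simp only [GapCloses, not_or] at hQ
    exact ⟨hQ.2.2, hQ.2.1⟩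
  · rintro ⟨e, hae, hlt, -, hQ⟩
    exact absurd (gapEnd_le hae hQ) (by omega)

theorem gapEnd_eq (hbn : b ≤ n) (hab : a ≤ b) (hgap : IsRun R j (j ∉ S ·) a b)
    (hb : GapCloses n R S j b) : gapEnd n R S j a = b := by
  refine le_antisymm (gapEnd_le hab hb) (not_lt.1 fun hlt => ?_)
  have hmem : a ≤ gapEnd n R S j a ∧ GapCloses n R S j (gapEnd n R S j a) :=
    Nat.sInf_mem (s := {e | a ≤ e ∧ GapCloses n R S j e}) ⟨b, hab, hb⟩
  rcases hmem.2 with he | he | he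
  · omega
  · exact hgap.1 _ (by omega) (by omega) he
  · exact hgap.2 _ hmem.1 (by omega) he

theorem gapStart_spec (hb : 1 ≤ b) (hgap : IsGapEnd n R S j b) :
    1 ≤ gapStart R S j b ∧ gapStart R S j b ≤ b ∧ IsRun R j (j ∉ S ·) (gapStart R S j b) b :=
  runStart_spec hb hgap.1

theorem rowStart_spec (hb : 1 ≤ b) (hi : i ∈ S b) :
    1 ≤ rowStart R S i b ∧ rowStart R S i b ≤ b ∧ IsRun R i (i ∈ S ·) (rowStart R S i b) b :=
  runStart_spec hb hi

theorem gapEnd_eq_iff (hb : 1 ≤ b) (hbn : b ≤ n) (hgap : IsGapEnd n R S j b) (ha : 1 ≤ a)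
    (han : a ≤ n) (hja : j ∉ S a) :
    gapEnd n R S j a = b ↔ gapStart R S j b ≤ a ∧ a ≤ b := by
  constructor
  · rintro rfl
    obtain ⟨hae, -, hrun, -⟩ := gapEnd_spec (R := R) ha han hja
    exact ⟨runStart_le ha hrun, hae⟩
  · rintro ⟨hca, hab⟩
    exact gapEnd_eq hbn hab ((gapStart_spec hb hgap).2.2.mono hca) hgap.2

theorem mem_succ_of_mem_of_notMem (hstep : ∀ t, 1 ≤ t → t ≤ n - 1 → S t ⊆ S (t + 1) ∪ R t)
    (ht : 1 ≤ t) (htn : t < n) (hi : i ∈ S t) (hiR : i ∉ R t) : i ∈ S (t + 1) :=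
  (mem_union.1 (hstep t ht (by omega) hi)).resolve_right hiR

theorem mem_pred_gapStart (hstep : ∀ t, 1 ≤ t → t ≤ n - 1 → S t ⊆ S (t + 1) ∪ R t)
    (hb : 1 ≤ b) (hbn : b ≤ n) (hgap : IsGapEnd n R S j b) (hc : 2 ≤ gapStart R S j b) :
    j ∈ R (gapStart R S j b - 1) := by
  obtain ⟨-, hcb, hrun⟩ := gapStart_spec hb hgap
  have hboundary : ¬j ∉ S (gapStart R S j b - 1) ∨ j ∈ R (gapStart R S j b - 1) :=
    runStart_boundary hb hgap.1 hc
  by_contra hjR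
  have hjc := mem_succ_of_mem_of_notMem hstep (by omega) (by omega)
    (not_not.1 (hboundary.resolve_right hjR)) hjR
  rw [Nat.sub_add_cancel (by omega)] at hjc
  exact hrun.1 _ le_rfl hcb hjc

theorem exists_release (hstep : ∀ t, 1 ≤ t → t ≤ n - 1 → S t ⊆ S (t + 1) ∪ R t)
    (hbn : b ≤ n) (ha : 1 ≤ a) (hab : a ≤ b) (hi : i ∈ S a) (hrun : ¬IsRun R i (i ∈ S ·) a b) :
    ∃ h, a ≤ h ∧ h < b ∧ IsRun R i (i ∈ S ·) a h ∧ i ∈ R h := by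
  refine (isRun_or_exists_stop (Q := (i ∈ R ·)) ha hab hi ?_).resolve_left hrun
  exact fun t hat htb hrun' hiR =>
    ⟨hiR, mem_succ_of_mem_of_notMem hstep (by omega) (by omega) (hrun'.1 t hat le_rfl) hiR⟩

end Gap

section Count

open scoped Classical

variable {n : ℕ} {R S : ℕ → Finset ℕ} {i j a b c h : ℕ}

noncomputable def mutations (n : ℕ) (R S : ℕ → Finset ℕ) : Finset (ℕ × ℕ × ℕ × ℕ) :=
  {q ∈ Icc 1 (n + 1) ×ˢ Icc 1 (n + 1) ×ˢ Icc 1 n ×ˢ Icc 1 n | q ∈ Mut n R S}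

noncomputable def singularities (n : ℕ) (R S : ℕ → Finset ℕ) : Finset (ℕ × ℕ × ℕ) :=
  {p ∈ Icc 1 (n + 1) ×ˢ Icc 1 (n + 1) ×ˢ Icc 1 n | p ∈ Sing n R S}

def holes (n : ℕ) (S : ℕ → Finset ℕ) : Finset (ℕ × ℕ) :=
  {p ∈ Icc 1 (n + 1) ×ˢ Icc 1 n | p.1 ∉ S p.2}

noncomputable def gapEnds (n : ℕ) (R S : ℕ → Finset ℕ) : Finset (ℕ × ℕ) :=
  {g ∈ Icc 1 (n + 1) ×ˢ Icc 1 n | IsGapEnd n R S g.1 g.2}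

theorem mem_mutations {q : ℕ × ℕ × ℕ × ℕ} : q ∈ mutations n R S ↔ q ∈ Mut n R S := by
  refine ⟨fun hq => (mem_filter.1 hq).2, fun hq => mem_filter.2 ⟨?_, hq⟩⟩
  obtain ⟨hi, hj, -, ha, hab, hbn, -⟩ := hq
  simp only [mem_product, mem_Icc] at hi hj ⊢
  omega

theorem mem_singularities (hR : ∀ t, 1 ≤ t → t ≤ n - 1 → R t ⊆ Icc 1 (n + 1))
    {p : ℕ × ℕ × ℕ} : p ∈ singularities n R S ↔ p ∈ Sing n R S := by
  refine ⟨fun hp => (mem_filter.1 hp).2, fun hp => mem_filter.2 ⟨?_, hp⟩⟩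
  obtain ⟨hi, h, hm, hh, -, -, k, -, hk, hjk, -⟩ := hp
  rw [mem_Icc] at hh hk
  exact mem_product.2 ⟨hi, mem_product.2 ⟨hR k hk.1 hk.2 hjk, mem_Icc.2 (by omega)⟩⟩

theorem card_holes (hS : ∀ a, 1 ≤ a → a ≤ n → S a ⊆ Icc 1 (n + 1) ∧ #(S a) = a) :
    #(holes n S) = n * (n + 1) / 2 := by
  have hcolumn : ∀ a ∈ Icc 1 n, #{j ∈ Icc 1 (n + 1) | j ∉ S a} = n + 1 - a := by
    intro a ha
    rw [mem_Icc] at ha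
    obtain ⟨hsub, hcard⟩ := hS a ha.1 ha.2
    rw [filter_not, filter_mem_eq_inter, inter_eq_right.2 hsub, card_sdiff_of_subset hsub,
      Nat.card_Icc, hcard]
    omega
  have hreflect : ∑ a ∈ Icc 1 n, (n + 1 - a) = ∑ a ∈ range (n + 1), a := by
    rw [← Ico_add_one_right_eq_Icc, sum_Ico_reflect (fun a => a) 1 (Nat.le_succ (n + 1)),
      range_eq_Ico, sum_eq_sum_Ico_succ_bot (Nat.succ_pos n)]
    simp
  rw [holes, card_filter, sum_product_right]
  simp_rw [← card_filter]
  rw [sum_congr rfl hcolumn, hreflect, sum_range_id, Nat.add_sub_cancel, mul_comm]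

theorem gapEnd_mem_gapEnds (hj : j ∈ Icc 1 (n + 1)) (ha : 1 ≤ a) (han : a ≤ n) (hja : j ∉ S a) :
    (j, gapEnd n R S j a) ∈ gapEnds n R S := by
  obtain ⟨hae, hen, hrun, hcl⟩ := gapEnd_spec (R := R) ha han hja
  exact mem_filter.2 ⟨mem_product.2 ⟨hj, mem_Icc.2 ⟨by omega, hen⟩⟩, hrun.1 _ hae le_rfl, hcl⟩

theorem mapsTo_mutations :
    Set.MapsTo (fun q : ℕ × ℕ × ℕ × ℕ => (q.2.1, q.2.2.2)) (mutations n R S : Set _)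
      (gapEnds n R S : Set _) := by
  rintro ⟨i, j, a, b⟩ hq
  obtain ⟨-, hj, -, ha, hab, hbn, -, -, -, hj₁, -, hcl⟩ := mem_mutations.1 hq
  dsimp only at hj ha hab hbn hj₁ hcl ⊢
  exact mem_filter.2 ⟨mem_product.2 ⟨hj, mem_Icc.2 ⟨by omega, hbn⟩⟩, hj₁ b hab le_rfl, hcl⟩

theorem mapsTo_holes :
    Set.MapsTo (fun p : ℕ × ℕ => (p.1, gapEnd n R S p.1 p.2)) (holes n S : Set _)
      (gapEnds n R S : Set _) := by
  rintro ⟨j, a⟩ hp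
  obtain ⟨hbox, hja⟩ := mem_filter.1 hp
  obtain ⟨hj, ha⟩ := mem_product.1 hbox
  exact gapEnd_mem_gapEnds hj (mem_Icc.1 ha).1 (mem_Icc.1 ha).2 hja

theorem mapsTo_singularities (hR : ∀ t, 1 ≤ t → t ≤ n - 1 → R t ⊆ Icc 1 (n + 1)) :
    Set.MapsTo (fun p : ℕ × ℕ × ℕ => (p.2.1, gapEnd n R S p.2.1 p.2.2))
      (singularities n R S : Set _) (gapEnds n R S : Set _) := by
  rintro ⟨i, j, m⟩ hp
  obtain ⟨-, h, hm, hh, -, hjS, k, -, hk, hjk, -⟩ := (mem_singularities hR).1 hp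
  dsimp only at hm hjS hjk ⊢
  rw [mem_Icc] at hh hk
  subst hm
  exact gapEnd_mem_gapEnds (hR k hk.1 hk.2 hjk) (by omega) (by omega) hjS

theorem isMut_iff (hb : 1 ≤ b) (hbn : b ≤ n) (hgap : IsGapEnd n R S j b) :
    IsMut n R S i j a b ↔ i ∈ S b ∧ rowStart R S i b = a ∧ gapStart R S j b ≤ a := by
  constructor
  · rintro ⟨ha, hab, -, hi₁, hi₂, hleft, hj₁, hj₂, -⟩
    obtain ⟨hib, hstart⟩ :=
      (runStart_eq_iff (R := R) (x := i) (P := (i ∈ S ·)) ha hab).2 ⟨⟨hi₁, hi₂⟩, hleft⟩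
    exact ⟨hib, hstart, runStart_le (P := (j ∉ S ·)) ha ⟨hj₁, hj₂⟩⟩
  · rintro ⟨hib, rfl, hca⟩
    obtain ⟨ha, hab, -⟩ := rowStart_spec hb hib
    obtain ⟨⟨hi₁, hi₂⟩, hleft⟩ := (runStart_eq_iff ha hab).1 ⟨hib, rfl⟩
    obtain ⟨hj₁, hj₂⟩ := (gapStart_spec hb hgap).2.2.mono hca
    exact ⟨ha, hab, hbn, hi₁, hi₂, hleft, hj₁, hj₂, hgap.2⟩

theorem card_mutations_fiber
    (hS : ∀ a, 1 ≤ a → a ≤ n → S a ⊆ Icc 1 (n + 1) ∧ #(S a) = a) (hj : j ∈ Icc 1 (n + 1))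
    (hb : 1 ≤ b) (hbn : b ≤ n) (hgap : IsGapEnd n R S j b) :
    #{q ∈ mutations n R S | (q.2.1, q.2.2.2) = (j, b)} =
      #{i ∈ S b | gapStart R S j b ≤ rowStart R S i b} := by
  have hfiber : {q ∈ mutations n R S | (q.2.1, q.2.2.2) = (j, b)} =
      {i ∈ S b | gapStart R S j b ≤ rowStart R S i b}.image
        fun i => (i, j, rowStart R S i b, b) := by
    ext ⟨i, j', a, b'⟩
    simp only [mem_filter, mem_image, mem_mutations, Prod.mk.injEq]
    constructor
    · rintro ⟨⟨-, -, -, hmut⟩, rfl, rfl⟩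
      dsimp only at hmut
      obtain ⟨hib, rfl, hca⟩ := (isMut_iff hb hbn hgap).1 hmut
      exact ⟨i, ⟨hib, hca⟩, rfl, rfl, rfl, rfl⟩
    · rintro ⟨i, ⟨hib, hca⟩, rfl, rfl, rfl, rfl⟩
      exact ⟨⟨(hS b hb hbn).1 hib, hj, fun hij : i = j => hgap.1 (hij ▸ hib),
        (isMut_iff hb hbn hgap).2 ⟨hib, rfl, hca⟩⟩, rfl, rfl⟩
  rw [hfiber, card_image_of_injective _ fun i i' h => (Prod.mk.inj h).1]

theorem card_holes_fiber (hj : j ∈ Icc 1 (n + 1)) (hb : 1 ≤ b) (hbn : b ≤ n)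
    (hgap : IsGapEnd n R S j b) :
    #{p ∈ holes n S | (p.1, gapEnd n R S p.1 p.2) = (j, b)} = b + 1 - gapStart R S j b := by
  obtain ⟨hc, -, hrun⟩ := gapStart_spec hb hgap
  have hfiber : {p ∈ holes n S | (p.1, gapEnd n R S p.1 p.2) = (j, b)} =
      {j} ×ˢ Icc (gapStart R S j b) b := by
    ext ⟨j', a⟩
    simp only [holes, mem_filter, mem_product, mem_Icc, mem_singleton, Prod.mk.injEq]
    constructor
    · rintro ⟨⟨⟨-, ha⟩, hja⟩, rfl, hend⟩
      exact ⟨rfl, (gapEnd_eq_iff hb hbn hgap ha.1 ha.2 hja).1 hend⟩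
    · rintro ⟨rfl, hca, hab⟩
      have hja : j' ∉ S a := hrun.1 a hca hab
      exact ⟨⟨⟨mem_Icc.1 hj, by omega, by omega⟩, hja⟩, rfl,
        (gapEnd_eq_iff hb hbn hgap (by omega) (by omega) hja).2 ⟨hca, hab⟩⟩
  rw [hfiber, card_product, card_singleton, Nat.card_Icc, one_mul]

/-- The release of `j` at `k` that makes `(i, j, h + 1)` singular must precede the gap `[c, b]`
containing `h + 1`, so the run of `i` from `k` to its release `h` passes through `c - 1`. -/
theorem exists_release_of_mem_singularities_fiber
    (hR : ∀ t, 1 ≤ t → t ≤ n - 1 → R t ⊆ Icc 1 (n + 1)) (hb : 1 ≤ b)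
    (hgap : IsGapEnd n R S j b) {p : ℕ × ℕ × ℕ}
    (hp : p ∈ {p ∈ singularities n R S | (p.2.1, gapEnd n R S p.2.1 p.2.2) = (j, b)}) :
    ∃ h, p = (p.1, j, h + 1) ∧ 2 ≤ gapStart R S j b ∧ gapStart R S j b - 1 ≤ h ∧ h < b ∧
      IsRun R p.1 (p.1 ∈ S ·) (gapStart R S j b - 1) h ∧ p.1 ∈ R h := by
  obtain ⟨i, j', m⟩ := p
  obtain ⟨hp, hfiber⟩ := mem_filter.1 hp
  obtain ⟨-, h, hm, hh, hiR, hjS, k, hkh, hk, hjk, hi₁, hi₂⟩ := (mem_singularities hR).1 hp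
  obtain ⟨hj, hend⟩ := Prod.mk.inj hfiber
  dsimp only at hj hm hh hiR hjS hkh hk hjk hi₁ hi₂ hend ⊢
  subst j' hm
  rw [mem_Icc] at hh hk
  obtain ⟨hhb, -, hgap', -⟩ := gapEnd_spec (n := n) (R := R) (by omega) (by omega) hjS
  rw [hend] at hhb hgap'
  have hch : gapStart R S j b ≤ h + 1 := runStart_le (by omega) hgap'
  have hkc : k < gapStart R S j b :=
    not_le.1 fun hck => (gapStart_spec hb hgap).2.2.2 k hck (by omega) hjk
  have hirun : IsRun R i (i ∈ S ·) k h := ⟨hi₁, hi₂⟩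
  exact ⟨h, rfl, by omega, by omega, by omega, hirun.mono (by omega), hiR⟩

theorem mem_singularities_fiber (hR : ∀ t, 1 ≤ t → t ≤ n - 1 → R t ⊆ Icc 1 (n + 1))
    (hS : ∀ a, 1 ≤ a → a ≤ n → S a ⊆ Icc 1 (n + 1) ∧ #(S a) = a)
    (hstep : ∀ t, 1 ≤ t → t ≤ n - 1 → S t ⊆ S (t + 1) ∪ R t)
    (hb : 1 ≤ b) (hbn : b ≤ n) (hgap : IsGapEnd n R S j b) (hc : 2 ≤ gapStart R S j b)
    (hch : gapStart R S j b - 1 ≤ h) (hhb : h < b)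
    (hrun : IsRun R i (i ∈ S ·) (gapStart R S j b - 1) h) (hiR : i ∈ R h) :
    (i, j, h + 1) ∈ {p ∈ singularities n R S | (p.2.1, gapEnd n R S p.2.1 p.2.2) = (j, b)} := by
  obtain ⟨-, hcb, hgap'⟩ := gapStart_spec hb hgap
  have hsing : SingCond n R S i j h :=
    ⟨mem_Icc.2 ⟨by omega, by omega⟩, hiR, hgap'.1 _ (by omega) (by omega), _, hch,
      mem_Icc.2 ⟨by omega, by omega⟩, mem_pred_gapStart hstep hb hbn hgap hc, hrun.1, hrun.2⟩
  have hend : gapEnd n R S j (h + 1) = b := gapEnd_eq hbn (by omega) (hgap'.mono (by omega)) hgap.2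
  refine mem_filter.2 ⟨(mem_singularities hR).2 ⟨?_, h, rfl, hsing⟩, by simp only [hend]⟩
  exact (hS _ (by omega) (by omega)).1 (hrun.1 _ le_rfl hch)

theorem singularities_fiber_eq_empty (hR : ∀ t, 1 ≤ t → t ≤ n - 1 → R t ⊆ Icc 1 (n + 1))
    (hb : 1 ≤ b) (hgap : IsGapEnd n R S j b) (hc : gapStart R S j b < 2) :
    {p ∈ singularities n R S | (p.2.1, gapEnd n R S p.2.1 p.2.2) = (j, b)} = ∅ := by
  refine eq_empty_of_forall_notMem fun p hp => ?_
  obtain ⟨h, -, hc', -⟩ := exists_release_of_mem_singularities_fiber hR hb hgap hp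
  omega

theorem card_singularities_fiber (hR : ∀ t, 1 ≤ t → t ≤ n - 1 → R t ⊆ Icc 1 (n + 1))
    (hS : ∀ a, 1 ≤ a → a ≤ n → S a ⊆ Icc 1 (n + 1) ∧ #(S a) = a)
    (hstep : ∀ t, 1 ≤ t → t ≤ n - 1 → S t ⊆ S (t + 1) ∪ R t)
    (hb : 1 ≤ b) (hbn : b ≤ n) (hgap : IsGapEnd n R S j b) (hc : 2 ≤ gapStart R S j b) :
    #{p ∈ singularities n R S | (p.2.1, gapEnd n R S p.2.1 p.2.2) = (j, b)} =
      #{i ∈ S (gapStart R S j b - 1) | ¬IsRun R i (i ∈ S ·) (gapStart R S j b - 1) b} := by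
  obtain ⟨-, hcb, -⟩ := gapStart_spec hb hgap
  refine card_bij (fun p _ => p.1) (fun p hp => ?_) (fun p hp p' hp' hpp' => ?_) fun i hi => ?_
  · obtain ⟨h, -, -, hch, hhb, hrun, hiR⟩ := exists_release_of_mem_singularities_fiber hR hb hgap hp
    exact mem_filter.2 ⟨hrun.1 _ le_rfl hch, fun hrun' => hrun'.2 h hch (by omega) hiR⟩
  · obtain ⟨h, hp, -, hch, -, hrun, hiR⟩ := exists_release_of_mem_singularities_fiber hR hb hgap hp
    obtain ⟨h', hp', -, hch', -, hrun', hiR'⟩ :=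
      exists_release_of_mem_singularities_fiber hR hb hgap hp'
    rw [hp, hp', hpp', hrun.eq_of_mem hiR (hpp' ▸ hrun') (hpp' ▸ hiR') hch hch']
  · obtain ⟨hic, hnrun⟩ := mem_filter.1 hi
    obtain ⟨h, hch, hhb, hrun, hiR⟩ := exists_release hstep hbn (by omega) (by omega) hic hnrun
    exact ⟨(i, j, h + 1), mem_singularities_fiber hR hS hstep hb hbn hgap hc hch hhb hrun hiR, rfl⟩

theorem filter_rowStart_lt_eq (hb : 1 ≤ b) (hc : 2 ≤ c) (hcb : c ≤ b) :
    {i ∈ S b | ¬c ≤ rowStart R S i b} = {i ∈ S (c - 1) | IsRun R i (i ∈ S ·) (c - 1) b} := by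
  ext i
  simp only [mem_filter, not_le]
  constructor
  · rintro ⟨hib, hlt⟩
    obtain ⟨-, -, hrun⟩ := rowStart_spec hb hib
    have hrun' := hrun.mono (show rowStart R S i b ≤ c - 1 by omega)
    exact ⟨hrun'.1 _ le_rfl (by omega), hrun'⟩
  · rintro ⟨-, hrun⟩
    exact ⟨hrun.1 b (by omega) le_rfl, (runStart_le (by omega) hrun).trans_lt (by omega)⟩

theorem card_mutations_fiber_eq (hR : ∀ t, 1 ≤ t → t ≤ n - 1 → R t ⊆ Icc 1 (n + 1))
    (hS : ∀ a, 1 ≤ a → a ≤ n → S a ⊆ Icc 1 (n + 1) ∧ #(S a) = a)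
    (hstep : ∀ t, 1 ≤ t → t ≤ n - 1 → S t ⊆ S (t + 1) ∪ R t)
    (hg : (j, b) ∈ gapEnds n R S) :
    #{q ∈ mutations n R S | (q.2.1, q.2.2.2) = (j, b)} =
      #{p ∈ holes n S | (p.1, gapEnd n R S p.1 p.2) = (j, b)} +
        #{p ∈ singularities n R S | (p.2.1, gapEnd n R S p.2.1 p.2.2) = (j, b)} := by
  simp only [gapEnds, mem_filter, mem_product] at hg
  obtain ⟨⟨hj, hb⟩, hgap⟩ := hg
  obtain ⟨hb, hbn⟩ := mem_Icc.1 hb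
  obtain ⟨hc, hcb, -⟩ := gapStart_spec hb hgap
  have hSb := (hS b hb hbn).2
  rw [card_mutations_fiber hS hj hb hbn hgap, card_holes_fiber hj hb hbn hgap]
  rcases Nat.lt_or_ge (gapStart R S j b) 2 with hc2 | hc2
  · rw [singularities_fiber_eq_empty hR hb hgap hc2, card_empty,
      filter_true_of_mem fun i hi => le_trans (by omega) (rowStart_spec hb hi).1]
    omega
  · rw [card_singularities_fiber hR hS hstep hb hbn hgap hc2]
    have hsplit_b := card_filter_add_card_filter_not (s := S b)
      fun i => gapStart R S j b ≤ rowStart R S i b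
    have hsplit_c := card_filter_add_card_filter_not (s := S (gapStart R S j b - 1))
      fun i => IsRun R i (i ∈ S ·) (gapStart R S j b - 1) b
    rw [filter_rowStart_lt_eq hb hc2 hcb] at hsplit_b
    have hSc := (hS (gapStart R S j b - 1) (by omega) (by omega)).2
    omega

end Count

end AdmissibleSequence

open AdmissibleSequence Finset

theorem mut_card_eq_general (n : ℕ) (R S : ℕ → Finset ℕ)
    (hadm : RAdmissible n R S) :
    (Mut n R S).ncard = n * (n + 1) / 2 + (Sing n R S).ncard := by
  obtain ⟨hR, hS, hstep⟩ := hadm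
  rw [← Set.ext fun _ => mem_mutations, ← Set.ext fun _ => mem_singularities hR,
    Set.ncard_coe_finset, Set.ncard_coe_finset, ← card_holes hS,
    card_eq_sum_card_fiberwise mapsTo_mutations, card_eq_sum_card_fiberwise mapsTo_holes,
    card_eq_sum_card_fiberwise (mapsTo_singularities hR), ← sum_add_distrib]
  exact sum_congr rfl fun ⟨_, _⟩ hg => card_mutations_fiber_eq hR hS hstep hg

/-- `|Mut(S)| = n(n+1)/2 + |Sing(S)|`. -/
theorem mut_card_eq (n : ℕ) (hn : 1 ≤ n) (R S : ℕ → Finset ℕ)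
    (hadm : RAdmissible n R S) :
    (Mut n R S).ncard = n * (n + 1) / 2 + (Sing n R S).ncard :=
  mut_card_eq_general n R S hadm
end

section
/- Let n ≥ 1, let R = (R_1, …, R_{n−1}) be a family of subsets of {1, …, n+1}, and let S be an R-admissible sequence with Sing(S) = ∅. Then Q_S has an empty row: there exists j ∈ {1, …, n+1} such that j ∉ S_h for all 1 ≤ h ≤ n. (Equivalently: if every j ∈ {1,…,n+1} belongs to some S_h, then Sing(S) ≠ ∅.) -/
/-- If `S` is an `R`-admissible sequence with `Sing(S) = ∅`, then `Q_S` has an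
empty row: there is `j ∈ {1, …, n+1}` with `j ∉ S_h` for all `1 ≤ h ≤ n`. -/
theorem sing_empty_implies_empty_row (n : ℕ) (hn : 1 ≤ n) (R S : ℕ → Finset ℕ)
    (hadm : RAdmissible n R S) (hsing : Sing n R S = ∅) :
    ∃ j ∈ Finset.Icc 1 (n + 1), ∀ h, 1 ≤ h → h ≤ n → j ∉ S h := by
  obtain ⟨_, hS, hsub⟩ := hadm
  obtain ⟨hSn_sub, hSn_card⟩ := hS n hn le_rfl
  -- there is j ∈ Icc 1 (n+1) not in S n
  have hlt : (S n).card < (Finset.Icc 1 (n + 1)).card := by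
    rw [hSn_card, Nat.card_Icc]; omega
  have hex : ∃ x ∈ Finset.Icc 1 (n + 1), x ∉ S n := by
    by_contra hx
    push_neg at hx
    have := Finset.card_le_card hx
    omega
  obtain ⟨j, hjIcc, hjSn⟩ := hex
  refine ⟨j, hjIcc, ?_⟩
  by_contra hcon
  push_neg at hcon
  obtain ⟨m, hm1, hmn, hjm⟩ := hcon
  set k := Nat.findGreatest (fun t => j ∈ S t) n with hk
  have hkm : m ≤ k := Nat.le_findGreatest hmn hjm
  have hk1 : 1 ≤ k := le_trans hm1 hkm
  have hkn : k ≤ n := Nat.findGreatest_le n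
  have hjk : j ∈ S k := Nat.findGreatest_spec (P := fun t => j ∈ S t) hmn hjm
  have hkne : k ≠ n := fun h => hjSn (h ▸ hjk)
  have hkn1 : k ≤ n - 1 := by omega
  have hjk1 : j ∉ S (k + 1) := Nat.findGreatest_is_greatest (P := fun t => j ∈ S t)
    (show Nat.findGreatest (fun t => j ∈ S t) n < k + 1 by omega) (show k + 1 ≤ n by omega)
  have hjRk : j ∈ R k := by
    have := hsub k hk1 hkn1 hjk
    rw [Finset.mem_union] at this
    tauto
  have : (j, j, k + 1) ∈ Sing n R S := by
    refine ⟨hjIcc, k, rfl, ⟨by simp [Finset.mem_Icc]; omega, hjRk, hjk1,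
      k, le_rfl, by simp [Finset.mem_Icc]; omega, hjRk, ?_, ?_⟩⟩
    · intro t ht1 ht2
      have : t = k := le_antisymm ht2 ht1
      rwa [this]
    · intro t ht1 ht2
      omega
  rw [hsing] at this
  exact this
end

section
/- Let n ≥ 1, let R = (R_1, …, R_{n−1}) be a family of subsets of {1, …, n+1}, let S be an R-admissible sequence, and suppose j ∈ {1, …, n+1} satisfies j ∉ S_h for all 1 ≤ h ≤ n (the j-th row of Q_S is empty). Then such j is unique and, for every i ∈ {1, …, n+1} with i ≠ j, Mut_S(i,j) ≠ ∅ and Mut_S(j,i) = ∅; in particular, j is a sink of the oriented mutation graph of S. -/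
/-- `Mut_S(i,j)`: the set of mutations of `S` from row `i` to row `j`. -/
def MutSet (n : ℕ) (R S : ℕ → Finset ℕ) (i j : ℕ) : Set (ℕ × ℕ) :=
  {p | IsMut n R S i j p.1 p.2}

lemma fg_spec {P : ℕ → Prop} [DecidablePred P] {n : ℕ}
    (h : Nat.findGreatest P n ≠ 0) : P (Nat.findGreatest P n) :=
  (Nat.findGreatest_eq_iff.1 rfl).2.1 h

/-- If `j ∈ {1, …, n+1}` satisfies `j ∉ S_h` for all `1 ≤ h ≤ n` (the `j`-th
row of `Q_S` is empty), then `j` is unique with this property and, for every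
`i ∈ {1, …, n+1}` with `i ≠ j`, `Mut_S(i,j) ≠ ∅` and `Mut_S(j,i) = ∅`; in particular
`j` is a sink of the oriented mutation graph of `S`. -/
theorem empty_row_sink (n : ℕ) (hn : 1 ≤ n) (R S : ℕ → Finset ℕ)
    (hadm : RAdmissible n R S) (j : ℕ) (hj : j ∈ Finset.Icc 1 (n + 1))
    (hempty : ∀ h, 1 ≤ h → h ≤ n → j ∉ S h) :
    (∀ j' ∈ Finset.Icc 1 (n + 1), (∀ h, 1 ≤ h → h ≤ n → j' ∉ S h) → j' = j) ∧
    (∀ i ∈ Finset.Icc 1 (n + 1), i ≠ j →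
      (MutSet n R S i j).Nonempty ∧ MutSet n R S j i = ∅) := by
  obtain ⟨hR, hS, hchain⟩ := hadm
  obtain ⟨hSn_sub, hSn_card⟩ := hS n hn le_rfl
  have hjn : j ∉ S n := hempty n hn le_rfl
  have hsd : (Finset.Icc 1 (n + 1) \ S n).card = 1 := by
    rw [Finset.card_sdiff_of_subset hSn_sub, hSn_card, Nat.card_Icc]
    omega
  obtain ⟨x, hx⟩ := Finset.card_eq_one.mp hsd
  have hjx : j = x := by
    have h1 : j ∈ Finset.Icc 1 (n + 1) \ S n := Finset.mem_sdiff.mpr ⟨hj, hjn⟩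
    rw [hx] at h1; simpa using h1
  have hmem : ∀ i ∈ Finset.Icc 1 (n + 1), i ≠ j → i ∈ S n := by
    intro i hi hij
    by_contra h
    have h1 : i ∈ Finset.Icc 1 (n + 1) \ S n := Finset.mem_sdiff.mpr ⟨hi, h⟩
    rw [hx] at h1
    exact hij (by simpa [← hjx] using h1)
  refine ⟨?_, ?_⟩
  · intro j' hj' hj'e
    have h1 : j' ∈ Finset.Icc 1 (n + 1) \ S n :=
      Finset.mem_sdiff.mpr ⟨hj', hj'e n hn le_rfl⟩
    rw [hx] at h1
    rw [hjx]; simpa using h1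
  · intro i hi hij
    constructor
    · -- construct a mutation from i to j
      have hiSn : i ∈ S n := hmem i hi hij
      set a₀ := Nat.findGreatest (fun t => 1 ≤ t ∧ i ∉ S t) n + 1 with ha₀def
      have hiS : ∀ t, a₀ ≤ t → t ≤ n → i ∈ S t := by
        intro t h1 h2
        by_contra hc
        have := Nat.le_findGreatest (P := fun t => 1 ≤ t ∧ i ∉ S t) h2 ⟨by omega, hc⟩
        omega
      have ha₀1 : 1 ≤ a₀ := by omega
      have ha₀n : a₀ ≤ n := by
        rcases Nat.eq_zero_or_pos (Nat.findGreatest (fun t => 1 ≤ t ∧ i ∉ S t) n)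
          with h | h
        · omega
        · have hspec : 1 ≤ Nat.findGreatest (fun t => 1 ≤ t ∧ i ∉ S t) n ∧
              i ∉ S (Nat.findGreatest (fun t => 1 ≤ t ∧ i ∉ S t) n) :=
            fg_spec (P := fun t => 1 ≤ t ∧ i ∉ S t) (by omega)
          have hle := Nat.findGreatest_le (P := fun t => 1 ≤ t ∧ i ∉ S t) n
          have : Nat.findGreatest (fun t => 1 ≤ t ∧ i ∉ S t) n ≠ n := by
            intro he; rw [he] at hspec; exact hspec.2 hiSn
          omega
      have ha₀left : a₀ = 1 ∨ i ∉ S (a₀ - 1) := by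
        rcases Nat.eq_zero_or_pos (Nat.findGreatest (fun t => 1 ≤ t ∧ i ∉ S t) n)
          with h | h
        · left; omega
        · right
          have hspec : 1 ≤ Nat.findGreatest (fun t => 1 ≤ t ∧ i ∉ S t) n ∧
              i ∉ S (Nat.findGreatest (fun t => 1 ≤ t ∧ i ∉ S t) n) :=
            fg_spec (P := fun t => 1 ≤ t ∧ i ∉ S t) (by omega)
          simpa [ha₀def] using hspec.2
      have hexb : ∃ t, a₀ ≤ t ∧ (t = n ∨ j ∈ R t) := ⟨n, ha₀n, Or.inl rfl⟩
      set b := Nat.find hexb with hbdef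
      obtain ⟨hba₀, hbright⟩ := Nat.find_spec hexb
      have hbn : b ≤ n := Nat.find_le ⟨ha₀n, Or.inl rfl⟩
      have hjR : ∀ t, a₀ ≤ t → t ≤ b - 1 → j ∉ R t := by
        intro t h1 h2 hc
        exact Nat.find_min hexb (by omega) ⟨h1, Or.inr hc⟩
      set g := Nat.findGreatest (fun t => a₀ ≤ t ∧ i ∈ R t) (b - 1) with hgdef
      set a := if g = 0 then a₀ else g + 1 with hadef
      have hga₀ : g ≠ 0 → a₀ ≤ g := fun h => (fg_spec h).1
      have hgle : g ≤ b - 1 := Nat.findGreatest_le _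
      have haa₀ : a₀ ≤ a := by
        rcases eq_or_ne g 0 with h | h
        · simp [hadef, h]
        · have := hga₀ h; simp [hadef, h]; omega
      have hab : a ≤ b := by
        rcases eq_or_ne g 0 with h | h
        · simp [hadef, h]; omega
        · have := hga₀ h; simp [hadef, h]; omega
      have hiRnot : ∀ t, a ≤ t → t ≤ b - 1 → i ∉ R t := by
        intro t h1 h2 hc
        have := Nat.le_findGreatest (P := fun t => a₀ ≤ t ∧ i ∈ R t) h2 ⟨le_trans haa₀ h1, hc⟩
        rcases eq_or_ne g 0 with h | h
        · omega
        · rw [hadef] at h1; simp [h] at h1; omega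
      refine ⟨(a, b), ?_⟩
      refine ⟨by omega, hab, hbn, ?_, hiRnot, ?_, ?_, ?_, ?_⟩
      · exact fun t h1 h2 => hiS t (le_trans haa₀ h1) (le_trans h2 hbn)
      · rcases eq_or_ne g 0 with h | h
        · rcases ha₀left with h' | h'
          · left; simp [hadef, h, h']
          · right; left; simpa [hadef, h] using h'
        · right; right
          have hspec : a₀ ≤ g ∧ i ∈ R g := fg_spec h
          have : a - 1 = g := by simp [hadef, h]
          rw [this]; exact hspec.2
      · exact fun t h1 h2 => hempty t (by omega) (le_trans h2 hbn)
      · exact fun t h1 h2 => hjR t (le_trans haa₀ h1) h2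
      · rcases hbright with h | h
        · exact Or.inl h
        · exact Or.inr (Or.inr h)
    · -- Mut_S(j, i) is empty
      ext p
      simp only [MutSet, Set.mem_setOf_eq, Set.mem_empty_iff_false, iff_false]
      rintro ⟨h1, h2, h3, h4, -⟩
      exact hempty p.1 h1 (by omega) (h4 p.1 le_rfl h2)
end

section
/- Let n ≥ 2, let R = (R_1, …, R_{n−1}) be a family of subsets of {1, …, n+1}, let S be an R-admissible sequence, and suppose j ∈ {1, …, n+1} satisfies j ∉ S_h for all h. Let R′ = (R′_1, …, R′_{n−2}) with R′_t = R_t \ {j} and S′ = (S_1, …, S_{n−1}), with mutations of S′ taken with respect to n−1 and R′. Then for every pair of rows h ≠ k with h ≠ j and k ≠ j there is an injection from Mut_{S′}(h,k) into Mut_S(h,k); in particular |Mut_{S′}(h,k)| ≤ |Mut_S(h,k)|. -/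
/-- Let `n ≥ 2`, let `S` be `R`-admissible with empty `j`-th row, and let
`R'_t = R_t \ {j}`, `S' = (S_1, …, S_{n-1})` the restricted data. Then for all rows
`h ≠ k`, both different from `j`, the set `Mut_{S'}(h,k)` (computed with respect to `n-1`
and `R'`) injects into `Mut_S(h,k)`; in particular `|Mut_{S'}(h,k)| ≤ |Mut_S(h,k)|`. -/
theorem restriction_mut_injection (n : ℕ) (hn : 2 ≤ n) (R S : ℕ → Finset ℕ)
    (hadm : RAdmissible n R S) (j : ℕ) (hj : j ∈ Finset.Icc 1 (n + 1))
    (hempty : ∀ h, 1 ≤ h → h ≤ n → j ∉ S h)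
    (h k : ℕ) (hh : h ∈ Finset.Icc 1 (n + 1)) (hk : k ∈ Finset.Icc 1 (n + 1))
    (hhk : h ≠ k) (hhj : h ≠ j) (hkj : k ≠ j) :
    (∃ f : ℕ × ℕ → ℕ × ℕ,
        Set.InjOn f (MutSet (n - 1) (fun t => R t \ {j}) S h k) ∧
        Set.MapsTo f (MutSet (n - 1) (fun t => R t \ {j}) S h k) (MutSet n R S h k)) ∧
      (MutSet (n - 1) (fun t => R t \ {j}) S h k).ncard ≤ (MutSet n R S h k).ncard := by
  obtain ⟨hR, hS, hchain⟩ := hadm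
  -- S n = Icc 1 (n+1) \ {j}, hence k ∈ S n
  have hSn := hS n (by omega) le_rfl
  have hkSn : k ∈ S n := by
    have hjn : j ∉ S n := hempty n (by omega) le_rfl
    have heq : S n = (Finset.Icc 1 (n + 1)).erase j := by
      apply Finset.eq_of_subset_of_card_le
      · intro x hx
        exact Finset.mem_erase.2 ⟨fun hxj => hjn (hxj ▸ hx), hSn.1 hx⟩
      · rw [Finset.card_erase_of_mem hj, hSn.2, Nat.card_Icc]; omega
    rw [heq]
    exact Finset.mem_erase.2 ⟨hkj, hk⟩
  -- the primed mutation set is a subset of the full one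
  have hsubset : MutSet (n - 1) (fun t => R t \ {j}) S h k ⊆ MutSet n R S h k := by
    rintro ⟨a, b⟩ ⟨h1, h2, h3, h4, h5, h6, h7, h8, h9⟩
    have hnotj : ∀ (x : ℕ) (t : ℕ), x ≠ j → x ∉ R t \ {j} → x ∉ R t := by
      intro x t hx hxR hxRt
      exact hxR (Finset.mem_sdiff.2 ⟨hxRt, by simpa using hx⟩)
    refine ⟨h1, h2, by omega, h4, fun t ht1 ht2 => hnotj h t hhj (h5 t ht1 ht2), ?_,
      h7, fun t ht1 ht2 => hnotj k t hkj (h8 t ht1 ht2), ?_⟩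
    · rcases h6 with h6 | h6 | h6
      · exact Or.inl h6
      · exact Or.inr (Or.inl h6)
      · exact Or.inr (Or.inr (Finset.mem_sdiff.1 h6).1)
    · rcases h9 with h9 | h9 | h9
      · -- b = n - 1, so k ∈ S (b+1) = S n
        right; left
        rw [h9]
        have : n - 1 + 1 = n := by omega
        rw [this]
        exact hkSn
      · exact Or.inr (Or.inl h9)
      · exact Or.inr (Or.inr (Finset.mem_sdiff.1 h9).1)
  have hfin : (MutSet n R S h k).Finite := by
    apply Set.Finite.subset ((Set.finite_Icc 1 n).prod (Set.finite_Icc 1 n))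
    rintro ⟨a, b⟩ ⟨h1, h2, h3, _⟩
    exact ⟨⟨h1, by omega⟩, ⟨by omega, h3⟩⟩
  exact ⟨⟨id, Set.injOn_id _, fun x hx => hsubset hx⟩,
    Set.ncard_le_ncard hsubset hfin⟩
end

section
/- Let n ≥ 1 and let R = (R_1, …, R_{n−1}) be a flat family of subsets of {1, …, n+1}. Let S be an R-admissible sequence. Then Sing(S) = ∅ if and only if the oriented mutation graph of S is a transitive tournament on n+1 vertices; that is, if and only if there exists a strict total order ≺ on {1, …, n+1} such that for all i ≠ j, |Mut_S(i,j)| = 1 when i ≺ j and Mut_S(i,j) = ∅ when j ≺ i. -/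
/-- `R` is a flat family. -/
def FlatFamily (n : ℕ) (R : ℕ → Finset ℕ) : Prop :=
  (∀ h, 1 ≤ h → h ≤ n - 1 → (R h).card ≤ 2) ∧
  (∀ h, 1 ≤ h → h ≤ n - 2 → (R h ∪ R (h + 1)).card ≤ 3)

/-!
If `Sing(S) = ∅`, no row can leave `S` through `R`, so `S` is a chain, each row `i` has an entry
column `entry i`, and distinct rows have distinct entry columns. A mutation from `i` to `j` runs
over columns where `i` is present and `j` is absent, so it exists only if `entry i < entry j`;
conversely one is found by ending at the first column where a mutation into `j` may end. Two of
them would be separated by a column where `i` leaves through `R` while `j` lies in `R`, which is a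
singularity.

For the other direction, count the mutations by their target `j`. The columns split into blocks,
each ending at a column `t` where a mutation into `j` may end, and a mutation into `j` starting at
column `a` is a row of `S a` that runs through the rest of the block of `a` but is not carried
over from column `a - 1`. Telescoping over the columns, the number of mutations into `j` is the number of
columns where `j ∉ S`, plus, for each block end `t`, the number `slack t` of rows of `S t` that are
not carried through the next block. A singularity with target `j` makes one of these positive.
Summing over `j`, the columns with `j ∉ S` number `n (n + 1) / 2`, which is exactly the number of
edges of a tournament on `n + 1` vertices, so a tournament leaves no room for a singularity.
-/

open Finset

lemma two_mul_sum_sum_of_add_swap_eq_one {α : Type*} [DecidableEq α] (s : Finset α)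
    (f : α → α → ℕ) (hdiag : ∀ x ∈ s, f x x = 0)
    (hpair : ∀ x ∈ s, ∀ y ∈ s, x ≠ y → f x y + f y x = 1) :
    2 * ∑ x ∈ s, ∑ y ∈ s, f x y = #s * (#s - 1) := by
  have hrow : ∀ x ∈ s, ∑ y ∈ s, (f x y + f y x) = #s - 1 := fun x hx => by
    rw [sum_congr rfl fun y hy => show f x y + f y x = if x = y then 0 else 1 by
      split_ifs with hxy
      · subst hxy; simp [hdiag x hx]
      · exact hpair x hx y hy hxy]
    simp [sum_ite, filter_ne, hx]
  rw [two_mul]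
  nth_rw 2 [sum_comm]
  rw [← sum_add_distrib, sum_congr rfl fun x hx => (sum_add_distrib).symm.trans (hrow x hx),
    sum_const, smul_eq_mul]

lemma two_mul_sum_Icc_sub (n : ℕ) : 2 * ∑ a ∈ Icc 1 n, (n + 1 - a) = n * (n + 1) := by
  have hreflect : ∑ a ∈ Icc 1 n, (n + 1 - a) = ∑ a ∈ range n, (a + 1) :=
    sum_nbij' (fun a => n - a) (fun a => n - a) (by intro a; simp; omega)
      (by intro a; simp; omega) (by intro a; simp; omega) (by intro a; simp; omega)
      (by intro a; simp; omega)
  have hgauss := sum_range_id_mul_two (n + 1)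
  rw [sum_range_succ'] at hgauss
  rw [hreflect]
  simp only [add_zero, add_tsub_cancel_right] at hgauss
  linarith

lemma eq_of_mem_sdiff_of_card_eq_succ {α : Type*} [DecidableEq α] {s t : Finset α}
    (hst : s ⊆ t) (hcard : #t = #s + 1) {x y : α} (hx : x ∈ t \ s) (hy : y ∈ t \ s) : x = y :=
  card_le_one.1 (by rw [card_sdiff_of_subset hst]; omega) x hx y hy

section MutationEnd

variable (n : ℕ) (R S : ℕ → Finset ℕ) (j : ℕ)

def IsMutEnd (b : ℕ) : Prop := b = n ∨ j ∈ S (b + 1) ∨ j ∈ R b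

noncomputable def mutEnd (a : ℕ) : ℕ := sInf {b | a ≤ b ∧ IsMutEnd n R S j b}

variable {n R S j} {i a b : ℕ}

lemma mutEnd_le_of_isMutEnd (hab : a ≤ b) (hb : IsMutEnd n R S j b) : mutEnd n R S j a ≤ b :=
  Nat.sInf_le ⟨hab, hb⟩

lemma mutEnd_spec (ha : a ≤ n) : a ≤ mutEnd n R S j a ∧ IsMutEnd n R S j (mutEnd n R S j a) :=
  Nat.sInf_mem (⟨n, ha, Or.inl rfl⟩ : {b | a ≤ b ∧ IsMutEnd n R S j b}.Nonempty)

lemma le_mutEnd (ha : a ≤ n) : a ≤ mutEnd n R S j a := (mutEnd_spec ha).1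

lemma isMutEnd_mutEnd (ha : a ≤ n) : IsMutEnd n R S j (mutEnd n R S j a) := (mutEnd_spec ha).2

lemma mutEnd_le (ha : a ≤ n) : mutEnd n R S j a ≤ n := mutEnd_le_of_isMutEnd ha (Or.inl rfl)

lemma not_isMutEnd_of_lt_mutEnd (hab : a ≤ b) (hb : b < mutEnd n R S j a) :
    ¬ IsMutEnd n R S j b :=
  fun h => (mutEnd_le_of_isMutEnd hab h).not_gt hb

lemma mutEnd_eq_self (h : IsMutEnd n R S j a) : mutEnd n R S j a = a :=
  (mutEnd_le_of_isMutEnd le_rfl h).antisymm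
    (Nat.sInf_mem (s := {b | a ≤ b ∧ IsMutEnd n R S j b}) ⟨a, le_rfl, h⟩).1

lemma mutEnd_eq_mutEnd_succ (h : ¬ IsMutEnd n R S j a) :
    mutEnd n R S j a = mutEnd n R S j (a + 1) := by
  unfold mutEnd
  congr 1
  ext b
  refine ⟨fun ⟨hab, hb⟩ => ⟨?_, hb⟩, fun ⟨hab, hb⟩ => ⟨by omega, hb⟩⟩
  rcases hab.eq_or_lt with rfl | hlt
  · exact absurd hb h
  · exact hlt

lemma isMutEnd_of_mem (hadm : RAdmissible n R S) (ha : 1 ≤ a) (han : a ≤ n) (hj : j ∈ S a) :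
    IsMutEnd n R S j a := by
  rcases eq_or_ne a n with rfl | hne
  · exact Or.inl rfl
  · exact Or.inr (mem_union.1 (hadm.2.2 a ha (by omega) hj))

lemma IsMut.eq_mutEnd (h : IsMut n R S i j a b) : b = mutEnd n R S j a := by
  obtain ⟨ha, hab, hbn, -, -, -, hjS, hjR, hend⟩ := h
  refine ((mutEnd_le_of_isMutEnd hab hend).eq_or_lt.resolve_right fun hlt => ?_).symm
  have hβ := le_mutEnd (R := R) (S := S) (j := j) (hab.trans hbn)
  rcases isMutEnd_mutEnd (R := R) (S := S) (j := j) (hab.trans hbn) with h | h | h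
  · omega
  · exact hjS _ (by omega) (by omega) h
  · exact hjR _ hβ (by omega) h

end MutationEnd

section Blocks

variable (n : ℕ) (R S : ℕ → Finset ℕ) (j : ℕ)

/-- The rows that continue from column `t` to column `t + 1`, so that no mutation of them starts
at `t + 1`; column `0` is empty because every mutation may start at column `1`. -/
def live (t : ℕ) : Finset ℕ := if t = 0 then ∅ else S t \ R t

noncomputable def spanning (a : ℕ) : Finset ℕ :=
  {i ∈ S a | (∀ u, a ≤ u → u ≤ mutEnd n R S j a → i ∈ S u) ∧
    ∀ u, a ≤ u → u < mutEnd n R S j a → i ∉ R u}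

noncomputable def carried (t : ℕ) : ℕ := #(spanning n R S j (t + 1) ∩ live R S t)

noncomputable def slack (t : ℕ) : ℤ :=
  if t < n ∧ j ∉ S (t + 1) then t - carried n R S j t else 0

variable {n R S j} {i a b t : ℕ}

lemma mem_live : i ∈ live R S t ↔ t ≠ 0 ∧ i ∈ S t ∧ i ∉ R t := by
  unfold live; split_ifs with h <;> simp [h]

lemma isMut_iff (ha : 1 ≤ a) (han : a ≤ n) :
    IsMut n R S i j a b ↔
      j ∉ S a ∧ i ∈ spanning n R S j a \ live R S (a - 1) ∧ b = mutEnd n R S j a := by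
  have hβ := le_mutEnd (R := R) (S := S) (j := j) han
  constructor
  · intro h
    have hb := h.eq_mutEnd
    obtain ⟨-, hab, -, hiS, hiR, hstart, hjS, -, -⟩ := h
    subst hb
    refine ⟨hjS a le_rfl hab, mem_sdiff.2 ⟨mem_filter.2 ⟨hiS a le_rfl hab, hiS,
      fun u hu hu' => hiR u hu (by omega)⟩, ?_⟩, rfl⟩
    rw [mem_live]
    rintro ⟨h0, hS, hR⟩
    rcases hstart with h | h | h
    · omega
    · exact h hS
    · exact hR h
  · rintro ⟨hjSa, hi, rfl⟩
    obtain ⟨hspan, hlive⟩ := mem_sdiff.1 hi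
    obtain ⟨-, hiS, hiR⟩ := mem_filter.1 hspan
    rw [mem_live] at hlive
    refine ⟨ha, hβ, mutEnd_le han, hiS, fun u hu hu' => hiR u hu (by omega), ?_,
      fun u hu hu' => ?_, fun u hu hu' => ?_, isMutEnd_mutEnd han⟩
    · by_contra hc
      push Not at hc
      exact hlive ⟨by omega, hc.2⟩
    · rcases hu.eq_or_lt with rfl | hlt
      · exact hjSa
      · have := not_isMutEnd_of_lt_mutEnd (n := n) (R := R) (S := S) (j := j)
          (show a ≤ u - 1 by omega) (by omega)
        rw [IsMutEnd, show u - 1 + 1 = u by omega] at this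
        tauto
    · have := not_isMutEnd_of_lt_mutEnd (n := n) (R := R) (S := S) (j := j) hu (by omega)
      rw [IsMutEnd] at this
      tauto

lemma spanning_of_isMutEnd (h : IsMutEnd n R S j a) : spanning n R S j a = S a := by
  ext i
  simp only [spanning, mem_filter, mutEnd_eq_self h, and_iff_left_iff_imp]
  exact fun hi => ⟨fun u hu hu' => le_antisymm hu' hu ▸ hi, fun u hu hu' => by omega⟩

lemma spanning_of_not_isMutEnd (ha : 1 ≤ a) (han : a ≤ n) (h : ¬ IsMutEnd n R S j a) :
    spanning n R S j a = spanning n R S j (a + 1) ∩ live R S a := by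
  have hβ : a + 1 ≤ mutEnd n R S j a := mutEnd_eq_mutEnd_succ h ▸
    le_mutEnd (show a + 1 ≤ n from lt_of_le_of_ne han fun h' => h (Or.inl h'))
  ext i
  simp only [spanning, mem_inter, mem_filter, mem_live, ← mutEnd_eq_mutEnd_succ h]
  constructor
  · rintro ⟨hi, hS, hR⟩
    exact ⟨⟨hS _ (by omega) (by omega), fun u hu => hS u (by omega), fun u hu => hR u (by omega)⟩,
      by omega, hi, hR a le_rfl (by omega)⟩
  · rintro ⟨⟨-, hS, hR⟩, -, hi, hRa⟩
    refine ⟨hi, fun u hu hu' => ?_, fun u hu hu' => ?_⟩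
    · rcases hu.eq_or_lt with rfl | hlt
      exacts [hi, hS u hlt hu']
    · rcases hu.eq_or_lt with rfl | hlt
      exacts [hRa, hR u hlt hu']

lemma carried_le (hadm : RAdmissible n R S) (htn : t ≤ n) : carried n R S j t ≤ t := by
  rcases Nat.eq_zero_or_pos t with rfl | ht
  · simp [carried, live]
  · calc carried n R S j t ≤ #(live R S t) := card_le_card inter_subset_right
      _ ≤ #(S t) := card_le_card (by simp [live, ht.ne'])
      _ = t := (hadm.2.1 t ht htn).2

lemma slack_nonneg (hadm : RAdmissible n R S) : 0 ≤ slack n R S j t := by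
  unfold slack
  split_ifs with h
  · have := carried_le (j := j) hadm h.1.le
    omega
  · rfl

lemma slack_zero : slack n R S j 0 = 0 := by
  simp [slack, carried, live]

end Blocks

section Counting

open scoped Classical

variable {n : ℕ} {R S : ℕ → Finset ℕ} {i j a h : ℕ}

lemma sum_card_isMut_eq (hadm : RAdmissible n R S) (ha : 1 ≤ a) (han : a ≤ n) :
    ∑ i ∈ Icc 1 (n + 1), #{b ∈ Icc 1 n | IsMut n R S i j a b} =
      if j ∈ S a then 0 else #(spanning n R S j a \ live R S (a - 1)) := by
  have hβ := le_mutEnd (R := R) (S := S) (j := j) han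
  have hβn := mutEnd_le (R := R) (S := S) (j := j) han
  have hfiber : ∀ i, #{b ∈ Icc 1 n | IsMut n R S i j a b} =
      if j ∉ S a ∧ i ∈ spanning n R S j a \ live R S (a - 1) then 1 else 0 := by
    intro i
    rw [filter_congr fun b _ => isMut_iff ha han]
    split_ifs with h
    · refine card_eq_one.2 ⟨mutEnd n R S j a, ?_⟩
      ext b
      simp only [h, not_false_eq_true, true_and, mem_filter, mem_Icc, mem_singleton]
      omega
    · exact card_eq_zero.2 (filter_false_of_mem fun b _ hb => h ⟨hb.1, hb.2.1⟩)
  rw [sum_congr rfl fun i _ => hfiber i, sum_boole, Nat.cast_id]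
  split_ifs with hj
  · simp [hj]
  · have hsub : spanning n R S j a \ live R S (a - 1) ⊆ Icc 1 (n + 1) :=
      sdiff_subset.trans ((filter_subset _ _).trans (hadm.2.1 a ha han).1)
    simp only [hj, not_false_eq_true, true_and, filter_mem_eq_inter, inter_eq_right.2 hsub]

lemma sum_card_isMut_eq_slack (hadm : RAdmissible n R S) (ha : 1 ≤ a) (han : a ≤ n) :
    ((∑ i ∈ Icc 1 (n + 1), #{b ∈ Icc 1 n | IsMut n R S i j a b} : ℕ) : ℤ) =
      (if j ∉ S a then 1 else 0) + slack n R S j (a - 1) - slack n R S j a +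
        if IsMutEnd n R S j a then slack n R S j a else 0 := by
  have ha' : a - 1 + 1 = a := by omega
  rw [sum_card_isMut_eq hadm ha han]
  by_cases hj : j ∈ S a
  · have hprev : slack n R S j (a - 1) = 0 := by simp [slack, ha', hj]
    simp [hj, hprev, isMutEnd_of_mem hadm ha han hj]
  have hprev : slack n R S j (a - 1) = ((a - 1 : ℕ) : ℤ) - carried n R S j (a - 1) := by
    simp only [slack, ha', hj, not_false_eq_true, and_true, show a - 1 < n by omega, if_true]
  have hsplit : #(spanning n R S j a \ live R S (a - 1)) + carried n R S j (a - 1) =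
      #(spanning n R S j a) := by
    rw [carried, ha', card_sdiff_add_card_inter]
  by_cases hend : IsMutEnd n R S j a
  · have hcard : #(spanning n R S j a) = a := by
      rw [spanning_of_isMutEnd hend, (hadm.2.1 a ha han).2]
    simp only [hj, hend, not_false_eq_true, if_true]
    push_cast [Nat.cast_sub ha] at hprev ⊢
    omega
  · have hcard : #(spanning n R S j a) = carried n R S j a := by
      rw [spanning_of_not_isMutEnd ha han hend, carried]
    have hnext : slack n R S j a = (a : ℤ) - carried n R S j a := by
      simp only [IsMutEnd, not_or] at hend
      simp only [slack, lt_of_le_of_ne han hend.1, hend.2.1, not_false_eq_true, and_self, if_true]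
    simp only [hj, hend, not_false_eq_true, if_true, if_false]
    push_cast [Nat.cast_sub ha] at hprev ⊢
    omega

lemma ncard_mutSet (i j : ℕ) :
    (MutSet n R S i j).ncard = ∑ a ∈ Icc 1 n, #{b ∈ Icc 1 n | IsMut n R S i j a b} := by
  have hfin : MutSet n R S i j = ↑{p ∈ Icc 1 n ×ˢ Icc 1 n | IsMut n R S i j p.1 p.2} := by
    ext ⟨a, b⟩
    simp only [MutSet, coe_filter, mem_product, mem_Icc]
    exact ⟨fun h => ⟨⟨⟨h.1, h.2.1.trans h.2.2.1⟩, h.1.trans h.2.1, h.2.2.1⟩, h⟩, And.right⟩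
  rw [hfin, Set.ncard_coe_finset, card_filter, sum_product]
  simp only [card_filter]

lemma sum_ncard_mutSet_eq (hadm : RAdmissible n R S) (j : ℕ) :
    ((∑ i ∈ Icc 1 (n + 1), (MutSet n R S i j).ncard : ℕ) : ℤ) =
      #{a ∈ Icc 1 n | j ∉ S a} +
        ∑ a ∈ Icc 1 n, if IsMutEnd n R S j a then slack n R S j a else 0 := by
  have htelescope : ∑ a ∈ Icc 1 n, (slack n R S j (a - 1) - slack n R S j a) = 0 := by
    rw [← Ico_add_one_right_eq_Icc, sum_Ico_eq_sum_range]
    have hlast : slack n R S j n = 0 := by simp [slack]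
    simpa [add_comm 1, slack_zero, hlast] using sum_range_sub' (slack n R S j) n
  simp_rw [ncard_mutSet]
  rw [sum_comm, Nat.cast_sum,
    sum_congr rfl fun a ha => sum_card_isMut_eq_slack hadm (mem_Icc.1 ha).1 (mem_Icc.1 ha).2]
  simp only [add_sub_assoc, sum_add_distrib, htelescope, add_zero, sum_boole]

/-- The last column `t ≤ h` at which a mutation into `j` may end still carries the row `i`,
which leaves through `R h` before the block after `t` is over. -/
lemma exists_one_le_slack (hadm : RAdmissible n R S) (hsc : SingCond n R S i j h) :
    ∃ t ∈ Icc 1 n, IsMutEnd n R S j t ∧ 1 ≤ slack n R S j t := by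
  obtain ⟨hh, hiR, hjS, k, hkh, hk, hjR, hiS, -⟩ := hsc
  rw [mem_Icc] at hh hk
  set t := Nat.findGreatest (IsMutEnd n R S j) h
  have hkR : IsMutEnd n R S j k := Or.inr (Or.inr hjR)
  have hkt : k ≤ t := Nat.le_findGreatest hkh hkR
  have hth : t ≤ h := Nat.findGreatest_le h
  have hlast : ∀ u, t < u → u ≤ h → ¬ IsMutEnd n R S j u :=
    fun u => Nat.findGreatest_is_greatest
  have hjt : j ∉ S (t + 1) := by
    rcases hth.eq_or_lt with hth | hth
    · exact hth ▸ hjS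
    · exact fun hj => hlast (t + 1) (by omega) hth (isMutEnd_of_mem hadm (by omega) (by omega) hj)
  have hspan : spanning n R S j (t + 1) ∩ live R S t ⊆ (S t).erase i := by
    intro x hx
    obtain ⟨hxspan, hxlive⟩ := mem_inter.1 hx
    obtain ⟨-, hxS, hxR⟩ := mem_live.1 hxlive
    refine mem_erase.2 ⟨?_, hxS⟩
    rintro rfl
    rcases hth.eq_or_lt with hth | hth
    · exact hxR (hth ▸ hiR)
    · have hβ : h < mutEnd n R S j (t + 1) := by
        by_contra hβ
        have := le_mutEnd (R := R) (S := S) (j := j) (show t + 1 ≤ n by omega)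
        exact hlast _ (by omega) (by omega) (isMutEnd_mutEnd (show t + 1 ≤ n by omega))
      exact (mem_filter.1 hxspan).2.2 h (by omega) hβ hiR
  have hcarried : carried n R S j t + 1 ≤ t := by
    have := card_le_card hspan
    rw [card_erase_of_mem (hiS t hkt hth), (hadm.2.1 t (by omega) (by omega)).2] at this
    unfold carried
    omega
  refine ⟨t, mem_Icc.2 ⟨by omega, by omega⟩, Nat.findGreatest_spec hkh hkR, ?_⟩
  simp only [slack, show t < n by omega, hjt, not_false_eq_true, and_self, if_true]
  omega

lemma card_absent_le_sum_ncard_mutSet (hadm : RAdmissible n R S) (j : ℕ) :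
    #{a ∈ Icc 1 n | j ∉ S a} ≤ ∑ i ∈ Icc 1 (n + 1), (MutSet n R S i j).ncard := by
  have hsum := sum_ncard_mutSet_eq hadm j
  have : 0 ≤ ∑ a ∈ Icc 1 n, if IsMutEnd n R S j a then slack n R S j a else 0 :=
    sum_nonneg fun a _ => by split_ifs <;> simp [slack_nonneg hadm]
  omega

lemma card_absent_lt_sum_ncard_mutSet (hadm : RAdmissible n R S) (hsc : SingCond n R S i j h) :
    #{a ∈ Icc 1 n | j ∉ S a} < ∑ i ∈ Icc 1 (n + 1), (MutSet n R S i j).ncard := by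
  obtain ⟨t, ht, hend, hslack⟩ := exists_one_le_slack hadm hsc
  have hsum := sum_ncard_mutSet_eq hadm j
  have := single_le_sum (f := fun a => if IsMutEnd n R S j a then slack n R S j a else 0)
    (fun a _ => by split_ifs <;> simp [slack_nonneg hadm]) ht
  simp only [hend, if_true] at this
  omega

lemma two_mul_sum_card_absent (hadm : RAdmissible n R S) :
    2 * ∑ j ∈ Icc 1 (n + 1), #{a ∈ Icc 1 n | j ∉ S a} = n * (n + 1) := by
  have hcol : ∀ a ∈ Icc 1 n, #{j ∈ Icc 1 (n + 1) | j ∉ S a} = n + 1 - a := fun a ha => by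
    obtain ⟨ha1, han⟩ := mem_Icc.1 ha
    rw [filter_not, filter_mem_eq_inter, inter_eq_right.2 (hadm.2.1 a ha1 han).1,
      card_sdiff_of_subset (hadm.2.1 a ha1 han).1, (hadm.2.1 a ha1 han).2, Nat.card_Icc,
      add_tsub_cancel_right]
  have := sum_card_bipartiteAbove_eq_sum_card_bipartiteBelow (fun j a => j ∉ S a)
    (s := Icc 1 (n + 1)) (t := Icc 1 n)
  simp only [bipartiteAbove, bipartiteBelow] at this
  rw [this, sum_congr rfl hcol, two_mul_sum_Icc_sub]

lemma sing_eq_empty_of_two_mul_sum_ncard_mutSet (hadm : RAdmissible n R S)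
    (hsum : 2 * ∑ j ∈ Icc 1 (n + 1), ∑ i ∈ Icc 1 (n + 1), (MutSet n R S i j).ncard =
      n * (n + 1)) :
    Sing n R S = ∅ := by
  refine Set.eq_empty_of_forall_notMem fun ⟨i, j, _⟩ ⟨_, h, _, hsc⟩ => ?_
  obtain ⟨k, -, hk, hjR, -⟩ := hsc.2.2.2
  have hj : j ∈ Icc 1 (n + 1) := hadm.1 k (mem_Icc.1 hk).1 (mem_Icc.1 hk).2 hjR
  have hlt := sum_lt_sum (fun j _ => card_absent_le_sum_ncard_mutSet hadm j)
    ⟨j, hj, card_absent_lt_sum_ncard_mutSet hadm hsc⟩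
  have := two_mul_sum_card_absent hadm
  omega

lemma mutSet_self (i : ℕ) : MutSet n R S i i = ∅ :=
  Set.eq_empty_of_forall_notMem fun ⟨a, _⟩ h =>
    h.2.2.2.2.2.2.1 a le_rfl h.2.1 (h.2.2.2.1 a le_rfl h.2.1)

end Counting

section Entry

variable {n : ℕ} {R S : ℕ → Finset ℕ} {i j k m t a b a' b' : ℕ}

lemma sing_nonempty (hi : i ∈ Icc 1 (n + 1)) (hk : 1 ≤ k) (hkm : k ≤ m) (hm : m ≤ n - 1)
    (hjR : j ∈ R k) (hiR : i ∈ R m) (hiS : ∀ t, k ≤ t → t ≤ m → i ∈ S t)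
    (hjS : ∀ t, k ≤ t → t ≤ m → j ∉ S (t + 1)) : (Sing n R S).Nonempty := by
  classical
  have hex : ∃ h, k ≤ h ∧ i ∈ R h := ⟨m, hkm, hiR⟩
  obtain ⟨hkh, hiRh⟩ := Nat.find_spec hex
  have hhm : Nat.find hex ≤ m := Nat.find_min' hex ⟨hkm, hiR⟩
  exact ⟨(i, j, Nat.find hex + 1), hi, Nat.find hex, rfl, mem_Icc.2 ⟨by omega, by omega⟩, hiRh,
    hjS _ hkh hhm, k, hkh, mem_Icc.2 ⟨hk, by omega⟩, hjR, fun t ht ht' => hiS t ht (by omega),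
    fun t ht ht' hiRt => Nat.find_min hex (by omega) ⟨ht, hiRt⟩⟩

lemma monotoneOn_of_sing_eq_empty (hadm : RAdmissible n R S) (hSing : Sing n R S = ∅) :
    MonotoneOn S (Set.Icc 1 n) := by
  refine monotoneOn_of_le_succ Set.ordConnected_Icc fun t _ ht ht' x hx => ?_
  rw [Order.succ_eq_add_one] at ht'
  by_contra hx'
  have hxR : x ∈ R t :=
    (mem_union.1 (hadm.2.2 t ht.1 (by have := ht'.2; omega) hx)).resolve_left hx'
  have := sing_nonempty ((hadm.2.1 t ht.1 ht.2).1 hx) ht.1 le_rfl (by have := ht'.2; omega) hxR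
    hxR (fun u hu hu' => le_antisymm hu' hu ▸ hx) (fun u hu hu' => le_antisymm hu' hu ▸ hx')
  rw [hSing] at this
  exact Set.not_nonempty_empty this

variable (n S) in
noncomputable def entry (i : ℕ) : ℕ := sInf {t | 1 ≤ t ∧ t ≤ n ∧ i ∈ S t ∨ t = n + 1}

lemma entry_spec (i : ℕ) :
    1 ≤ entry n S i ∧ entry n S i ≤ n ∧ i ∈ S (entry n S i) ∨ entry n S i = n + 1 :=
  Nat.sInf_mem (⟨n + 1, Or.inr rfl⟩ : {t | 1 ≤ t ∧ t ≤ n ∧ i ∈ S t ∨ t = n + 1}.Nonempty)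

lemma entry_le (i : ℕ) : entry n S i ≤ n + 1 := Nat.sInf_le (Or.inr rfl)

lemma one_le_entry (i : ℕ) : 1 ≤ entry n S i := by
  rcases entry_spec (n := n) (S := S) i with h | h <;> omega

lemma mem_iff_entry_le (hmono : MonotoneOn S (Set.Icc 1 n)) (ht : 1 ≤ t) (htn : t ≤ n) :
    i ∈ S t ↔ entry n S i ≤ t := by
  refine ⟨fun hi => Nat.sInf_le (Or.inl ⟨ht, htn, hi⟩), fun hle => ?_⟩
  rcases entry_spec (n := n) (S := S) i with ⟨he, hen, hi⟩ | he
  · exact hmono ⟨he, hen⟩ ⟨ht, htn⟩ hle hi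
  · omega

lemma entry_injOn (hn : 1 ≤ n) (hadm : RAdmissible n R S) (hmono : MonotoneOn S (Set.Icc 1 n)) :
    Set.InjOn (entry n S) (Icc 1 (n + 1) : Finset ℕ) := by
  intro i hi i' hi' he
  have hmem := fun (t : ℕ) (ht : 1 ≤ t) (htn : t ≤ n) => mem_iff_entry_le (i := i) hmono ht htn
  have hmem' := fun (t : ℕ) (ht : 1 ≤ t) (htn : t ≤ n) => mem_iff_entry_le (i := i') hmono ht htn
  have h1 := one_le_entry (n := n) (S := S) i
  have h2 := entry_le (n := n) (S := S) i
  obtain h | h | h : entry n S i = 1 ∨ (2 ≤ entry n S i ∧ entry n S i ≤ n) ∨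
    entry n S i = n + 1 := by omega
  · refine eq_of_mem_sdiff_of_card_eq_succ (empty_subset (S 1)) (by simp [hadm.2.1 1 le_rfl hn])
      (mem_sdiff.2 ⟨(hmem 1 le_rfl hn).2 h.le, notMem_empty _⟩)
      (mem_sdiff.2 ⟨(hmem' 1 le_rfl hn).2 (by omega), notMem_empty _⟩)
  · set e := entry n S i
    have hsub : S (e - 1) ⊆ S e := hmono ⟨by omega, by omega⟩ ⟨by omega, h.2⟩ (by omega)
    refine eq_of_mem_sdiff_of_card_eq_succ hsub ?_
      (mem_sdiff.2 ⟨(hmem e (by omega) h.2).2 le_rfl, by rw [hmem _ (by omega) (by omega)]; omega⟩)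
      (mem_sdiff.2 ⟨(hmem' e (by omega) h.2).2 (by omega),
        by rw [hmem' _ (by omega) (by omega)]; omega⟩)
    rw [(hadm.2.1 e (by omega) h.2).2, (hadm.2.1 (e - 1) (by omega) (by omega)).2]
    omega
  · refine eq_of_mem_sdiff_of_card_eq_succ (hadm.2.1 n hn le_rfl).1 ?_
      (mem_sdiff.2 ⟨hi, by rw [hmem n hn le_rfl]; omega⟩)
      (mem_sdiff.2 ⟨hi', by rw [hmem' n hn le_rfl]; omega⟩)
    rw [(hadm.2.1 n hn le_rfl).2, Nat.card_Icc]
    omega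

lemma IsMut.entry_le_and_lt_entry (hmono : MonotoneOn S (Set.Icc 1 n))
    (h : IsMut n R S i j a b) : entry n S i ≤ a ∧ a < entry n S j := by
  obtain ⟨ha, hab, hbn, hiS, -, -, hjS, -, -⟩ := h
  have hmem := fun k => mem_iff_entry_le (i := k) hmono ha (hab.trans hbn)
  exact ⟨(hmem i).1 (hiS a le_rfl hab), not_le.1 fun hle => hjS a le_rfl hab ((hmem j).2 hle)⟩

lemma mutSet_eq_empty_of_entry_le (hmono : MonotoneOn S (Set.Icc 1 n))
    (h : entry n S j ≤ entry n S i) : MutSet n R S i j = ∅ :=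
  Set.eq_empty_of_forall_notMem fun _ hm => by
    have := IsMut.entry_le_and_lt_entry hmono hm
    omega

lemma exists_isMut_of_entry_lt (hmono : MonotoneOn S (Set.Icc 1 n))
    (h : entry n S i < entry n S j) : ∃ a b, IsMut n R S i j a b := by
  classical
  have hmem := fun k t (ht : 1 ≤ t) (htn : t ≤ n) => mem_iff_entry_le (i := k) hmono ht htn
  have hi1 := one_le_entry (n := n) (S := S) i
  have hj1 := one_le_entry (n := n) (S := S) j
  have hen : entry n S i ≤ n := by have := entry_le (n := n) (S := S) j; omega
  set e := entry n S i
  set b := mutEnd n R S j e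
  have heb : e ≤ b := le_mutEnd hen
  have hbn : b ≤ n := mutEnd_le hen
  have hbj : b < entry n S j := by
    by_contra hcon
    have hend : IsMutEnd n R S j (entry n S j - 1) :=
      Or.inr (Or.inl ((hmem j _ (by omega) (by omega)).2 (by omega)))
    have := mutEnd_le_of_isMutEnd (show e ≤ entry n S j - 1 by omega) hend
    omega
  have hex : ∃ a, e ≤ a ∧ ∀ u, a ≤ u → u < b → i ∉ R u := ⟨b, heb, fun u hu hu' => by omega⟩
  obtain ⟨hea, hiR⟩ := Nat.find_spec hex
  have hab : Nat.find hex ≤ b := Nat.find_min' hex ⟨heb, fun u hu hu' => by omega⟩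
  refine ⟨Nat.find hex, b, by omega, hab, hbn,
    fun t ht ht' => (hmem i t (by omega) (by omega)).2 (by omega),
    fun t ht ht' => hiR t ht (by omega),
    ?_, fun t ht ht' => by rw [hmem j t (by omega) (by omega)]; omega, fun t ht ht' => ?_,
    isMutEnd_mutEnd hen⟩
  · rcases hea.eq_or_lt with hea | hea
    · by_cases ha1 : Nat.find hex = 1
      · exact Or.inl ha1
      · exact Or.inr (Or.inl (by rw [hmem i _ (by omega) (by omega)]; omega))
    · have hprev := Nat.find_min hex (show Nat.find hex - 1 < Nat.find hex by omega)
      push Not at hprev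
      obtain ⟨u, hu, hu', hiRu⟩ := hprev (by omega)
      obtain rfl : u = Nat.find hex - 1 := by
        by_contra hne
        exact hiR u (by omega) hu' hiRu
      exact Or.inr (Or.inr hiRu)
  · have := not_isMutEnd_of_lt_mutEnd (n := n) (R := R) (S := S) (j := j) (show e ≤ t by omega)
      (show t < b by omega)
    simp only [IsMutEnd, not_or] at this
    exact this.2.2

/-- A second mutation from `i` to `j` would have to start after the first one ends; then `i`
leaves through `R` between the two while `j` sits in `R` at the end of the first, a singularity. -/
lemma IsMut.eq_of_isMut (hadm : RAdmissible n R S) (hSing : Sing n R S = ∅)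
    (h : IsMut n R S i j a b) (h' : IsMut n R S i j a' b') : a = a' ∧ b = b' := by
  wlog haa : a ≤ a' generalizing a b a' b'
  · exact (this h' h (by omega)).imp Eq.symm Eq.symm
  suffices a = a' by subst this; exact ⟨rfl, h.eq_mutEnd.trans h'.eq_mutEnd.symm⟩
  have hmono := monotoneOn_of_sing_eq_empty hadm hSing
  have hmem := fun k t (ht : 1 ≤ t) (htn : t ≤ n) => mem_iff_entry_le (i := k) hmono ht htn
  have hi : i ∈ Icc 1 (n + 1) :=
    (hadm.2.1 a h.1 (h.2.1.trans h.2.2.1)).1 (h.2.2.2.1 a le_rfl h.2.1)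
  have hei := (h.entry_le_and_lt_entry hmono).1
  have hej := (h'.entry_le_and_lt_entry hmono).2
  obtain ⟨ha, hab, hbn, hiS, hiR, -, -, -, hend⟩ := h
  obtain ⟨ha', hab', hbn', -, -, hstart', -, -, -⟩ := h'
  by_contra hne
  rcases le_or_gt a' b with hle | hlt
  · rcases hstart' with h1 | hS | hR
    · omega
    · exact hS (hiS _ (by omega) (by omega))
    · exact hiR _ (by omega) (by omega) hR
  · have hjR : j ∈ R b := by
      rcases hend with h1 | hS | hR
      · omega
      · rw [hmem j _ (by omega) (by omega)] at hS; omega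
      · exact hR
    have hiR' : i ∈ R (a' - 1) := by
      rcases hstart' with h1 | hS | hR
      · omega
      · rw [hmem i _ (by omega) (by omega)] at hS; omega
      · exact hR
    have := sing_nonempty hi (show 1 ≤ b by omega) (show b ≤ a' - 1 by omega) (by omega) hjR hiR'
      (fun t ht ht' => (hmem i t (by omega) (by omega)).2 (by omega))
      (fun t ht ht' => by rw [hmem j _ (by omega) (by omega)]; omega)
    rw [hSing] at this
    exact Set.not_nonempty_empty this

lemma ncard_mutSet_eq_one (hadm : RAdmissible n R S) (hSing : Sing n R S = ∅)
    (h : entry n S i < entry n S j) : (MutSet n R S i j).ncard = 1 := by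
  obtain ⟨a, b, hab⟩ := exists_isMut_of_entry_lt (monotoneOn_of_sing_eq_empty hadm hSing) h
  refine Set.ncard_eq_one.2 ⟨(a, b), Set.eq_singleton_iff_unique_mem.2 ⟨hab, fun ⟨a', b'⟩ h' => ?_⟩⟩
  obtain ⟨rfl, rfl⟩ := IsMut.eq_of_isMut hadm hSing h' hab
  rfl

end Entry

theorem sing_empty_iff_transitive_tournament_general (n : ℕ) (hn : 1 ≤ n) (R S : ℕ → Finset ℕ)
    (hadm : RAdmissible n R S) :
    Sing n R S = ∅ ↔
      ∃ r : ℕ → ℕ → Prop,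
        (∀ i ∈ Finset.Icc 1 (n + 1), ¬ r i i) ∧
        (∀ i ∈ Finset.Icc 1 (n + 1), ∀ j ∈ Finset.Icc 1 (n + 1), ∀ k ∈ Finset.Icc 1 (n + 1),
          r i j → r j k → r i k) ∧
        (∀ i ∈ Finset.Icc 1 (n + 1), ∀ j ∈ Finset.Icc 1 (n + 1), i ≠ j → (r i j ∨ r j i)) ∧
        (∀ i ∈ Finset.Icc 1 (n + 1), ∀ j ∈ Finset.Icc 1 (n + 1), i ≠ j →
          (r i j → (MutSet n R S i j).ncard = 1) ∧ (r j i → MutSet n R S i j = ∅)) := by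
  constructor
  · intro hSing
    have hmono := monotoneOn_of_sing_eq_empty hadm hSing
    refine ⟨fun i j => entry n S i < entry n S j, fun i _ => lt_irrefl _,
      fun i _ j _ k _ => lt_trans, fun i hi j hj hij => ?_, fun i _ j _ _ => ?_⟩
    · exact lt_or_gt_of_ne ((entry_injOn hn hadm hmono).ne hi hj hij)
    · exact ⟨ncard_mutSet_eq_one hadm hSing, fun h => mutSet_eq_empty_of_entry_le hmono h.le⟩
  · rintro ⟨r, -, -, htotal, hmut⟩
    have hpair : ∀ j ∈ Icc 1 (n + 1), ∀ i ∈ Icc 1 (n + 1), j ≠ i →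
        (MutSet n R S i j).ncard + (MutSet n R S j i).ncard = 1 := by
      intro j hj i hi hji
      rcases htotal i hi j hj hji.symm with hr | hr
      · simp [(hmut i hi j hj hji.symm).1 hr, (hmut j hj i hi hji).2 hr]
      · simp [(hmut i hi j hj hji.symm).2 hr, (hmut j hj i hi hji).1 hr]
    refine sing_eq_empty_of_two_mul_sum_ncard_mutSet hadm ?_
    simpa [mul_comm] using two_mul_sum_sum_of_add_swap_eq_one (Icc 1 (n + 1))
      (fun j i => (MutSet n R S i j).ncard) (fun i _ => by simp [mutSet_self]) hpair

/-- For a flat family `R` and an `R`-admissible sequence `S`,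
`Sing(S) = ∅` if and only if the oriented mutation graph of `S` is a transitive tournament
on `n+1` vertices: there is a strict total order `r` on `{1, …, n+1}` such that for all
`i ≠ j`, `|Mut_S(i,j)| = 1` when `r i j` and `Mut_S(i,j) = ∅` when `r j i`. -/
theorem sing_empty_iff_transitive_tournament (n : ℕ) (hn : 1 ≤ n) (R S : ℕ → Finset ℕ)
    (hflat : FlatFamily n R) (hadm : RAdmissible n R S) :
    Sing n R S = ∅ ↔
      ∃ r : ℕ → ℕ → Prop,
        (∀ i ∈ Finset.Icc 1 (n + 1), ¬ r i i) ∧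
        (∀ i ∈ Finset.Icc 1 (n + 1), ∀ j ∈ Finset.Icc 1 (n + 1), ∀ k ∈ Finset.Icc 1 (n + 1),
          r i j → r j k → r i k) ∧
        (∀ i ∈ Finset.Icc 1 (n + 1), ∀ j ∈ Finset.Icc 1 (n + 1), i ≠ j → (r i j ∨ r j i)) ∧
        (∀ i ∈ Finset.Icc 1 (n + 1), ∀ j ∈ Finset.Icc 1 (n + 1), i ≠ j →
          (r i j → (MutSet n R S i j).ncard = 1) ∧ (r j i → MutSet n R S i j = ∅)) :=
  sing_empty_iff_transitive_tournament_general n hn R S hadm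
end

section
/- Let n ≥ 1 and let R = (R_1, …, R_{n−1}) be a flat family of subsets of {1, …, n+1}. Let S be an R-admissible sequence with Sing(S) = ∅, and let j ∈ {1, …, n+1} satisfy j ∉ S_h for all h. Then |Mut_S(i,j)| = 1 for every i ∈ {1, …, n+1} with i ≠ j. -/
/-- For a flat family `R` and an `R`-admissible sequence `S` with
`Sing(S) = ∅` and empty `j`-th row, `|Mut_S(i,j)| = 1` for every `i ∈ {1, …, n+1}`,
`i ≠ j`. -/
theorem mut_to_empty_row_unique (n : ℕ) (hn : 1 ≤ n) (R S : ℕ → Finset ℕ)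
    (hflat : FlatFamily n R) (hadm : RAdmissible n R S)
    (hsing : Sing n R S = ∅) (j : ℕ) (hj : j ∈ Finset.Icc 1 (n + 1))
    (hempty : ∀ h, 1 ≤ h → h ≤ n → j ∉ S h) :
    ∀ i ∈ Finset.Icc 1 (n + 1), i ≠ j → (MutSet n R S i j).ncard = 1 := by
  classical
  obtain ⟨hR, hScard, hstep⟩ := hadm
  intro i hi hij
  -- i belongs to S n
  have hSn := hScard n hn le_rfl
  have hin : i ∈ S n := by
    have hsub : insert j (S n) ⊆ Finset.Icc 1 (n + 1) := by
      intro x hx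
      rcases Finset.mem_insert.mp hx with rfl | hx
      · exact hj
      · exact hSn.1 hx
    have hcard : (insert j (S n)).card = n + 1 := by
      rw [Finset.card_insert_of_notMem (hempty n hn le_rfl), hSn.2]
    have heq : insert j (S n) = Finset.Icc 1 (n + 1) :=
      Finset.eq_of_subset_of_card_le hsub (by simp [hcard, Nat.card_Icc])
    have hmem : i ∈ insert j (S n) := heq ▸ hi
    rcases Finset.mem_insert.mp hmem with rfl | h
    · exact absurd rfl hij
    · exact h
  -- existence of a mutation
  have hwit : 1 ≤ n ∧ ∀ t, n ≤ t → t ≤ n → i ∈ S t ∧ (t ≤ n - 1 → i ∉ R t) := by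
    refine ⟨hn, fun t h1 h2 => ?_⟩
    have ht : t = n := le_antisymm h2 h1
    subst ht
    exact ⟨hin, fun h => absurd h (by omega)⟩
  have hexa : ∃ a, 1 ≤ a ∧ ∀ t, a ≤ t → t ≤ n → i ∈ S t ∧ (t ≤ n - 1 → i ∉ R t) :=
    ⟨n, hwit⟩
  set A := Nat.find hexa with hAdef
  obtain ⟨hA1, hAP⟩ := Nat.find_spec hexa
  have hAn : A ≤ n := Nat.find_le hwit
  have hleftA : A = 1 ∨ i ∉ S (A - 1) ∨ i ∈ R (A - 1) := by
    by_cases h : A = 1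
    · exact Or.inl h
    · right
      by_contra hcon
      push_neg at hcon
      obtain ⟨hS1, hR1⟩ := hcon
      exact Nat.find_min hexa (show A - 1 < A by omega)
        ⟨by omega, fun t h1 h2 => by
          by_cases hta : A ≤ t
          · exact hAP t hta h2
          · have ht : t = A - 1 := by omega
            subst ht
            exact ⟨hS1, fun _ => hR1⟩⟩
  have hwitb : A ≤ n ∧ (n = n ∨ j ∈ R n) := ⟨hAn, Or.inl rfl⟩
  have hexb : ∃ b, A ≤ b ∧ (b = n ∨ j ∈ R b) := ⟨n, hwitb⟩
  set B := Nat.find hexb with hBdef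
  obtain ⟨hAB, hBspec⟩ := Nat.find_spec hexb
  have hBn : B ≤ n := Nat.find_le hwitb
  have hmutAB : IsMut n R S i j A B := by
    refine ⟨hA1, hAB, hBn, ?_, ?_, hleftA, ?_, ?_, ?_⟩
    · exact fun t h1 h2 => (hAP t h1 (by omega)).1
    · exact fun t h1 h2 => (hAP t h1 (by omega)).2 (by omega)
    · exact fun t h1 h2 => hempty t (by omega) (by omega)
    · intro t h1 h2 hcon
      exact Nat.find_min hexb (show t < B by omega) ⟨h1, Or.inr hcon⟩
    · rcases hBspec with h | h
      · exact Or.inl h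
      · exact Or.inr (Or.inr h)
  -- uniqueness: two mutations cannot start at different columns
  have key : ∀ a b a' b', IsMut n R S i j a b → IsMut n R S i j a' b' → a < a' → False := by
    intro a b a' b' hp hq hlt
    obtain ⟨ha1, hab, hbn, hiS, hiR, hleft, hjS, hjR, hright⟩ := hp
    obtain ⟨ha1', hab', hbn', hiS', hiR', hleft', hjS', hjR', hright'⟩ := hq
    have hba' : b < a' := by
      by_contra h
      push_neg at h
      have hs := hiS (a' - 1) (by omega) (by omega)
      have hr := hiR (a' - 1) (by omega) (by omega)
      rcases hleft' with h1 | h1 | h1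
      · omega
      · exact h1 hs
      · exact hr h1
    have hjRb : j ∈ R b := by
      rcases hright with h | h | h
      · omega
      · exact absurd h (hempty (b + 1) (by omega) (by omega))
      · exact h
    have hexm : ∃ m, b ≤ m ∧ ((i ∈ R m ∧ m ≤ n - 1) ∨ a' ≤ m) :=
      ⟨a', by omega, Or.inr le_rfl⟩
    set m := Nat.find hexm with hmdef
    obtain ⟨hbm, hmc⟩ := Nat.find_spec hexm
    have hma' : m ≤ a' := Nat.find_le ⟨by omega, Or.inr le_rfl⟩
    have hint : ∀ t, b ≤ t → t < m → i ∉ R t := by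
      intro t h1 h2 hcon
      exact Nat.find_min hexm h2 ⟨h1, Or.inl ⟨hcon, by omega⟩⟩
    have hiSm : ∀ t, b ≤ t → t ≤ m → i ∈ S t := by
      intro t h1
      induction t, h1 using Nat.le_induction with
      | base => exact fun _ => hiS b hab le_rfl
      | succ t ht ih =>
        intro h2
        have hSt := ih (by omega)
        have hsub := hstep t (by omega) (by omega)
        rcases Finset.mem_union.mp (hsub hSt) with h | h
        · exact h
        · exact absurd h (hint t ht (by omega))
    rcases hmc with ⟨hRm, hmn⟩ | hma
    · have hSingel : (i, j, m + 1) ∈ Sing n R S := by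
        refine ⟨hi, m, rfl, ?_, hRm, hempty (m + 1) (by omega) (by omega),
          b, hbm, ?_, hjRb, fun t h1 h2 => hiSm t h1 h2,
          fun t h1 h2 => hint t h1 (by omega)⟩
        · simp only [Finset.mem_Icc]; omega
        · simp only [Finset.mem_Icc]; omega
      rw [hsing] at hSingel
      exact hSingel
    · have hma2 : m = a' := le_antisymm hma' hma
      rcases hleft' with h1 | h1 | h1
      · omega
      · exact h1 (hiSm (a' - 1) (by omega) (by omega))
      · exact hint (a' - 1) (by omega) (by omega) h1
  -- uniqueness for equal starting column
  have keyb : ∀ a b b', IsMut n R S i j a b → IsMut n R S i j a b' → b < b' → False := by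
    intro a b b' hp hq hlt
    obtain ⟨_, hab, hbn, _, _, _, _, _, hright⟩ := hp
    obtain ⟨_, _, hbn', _, _, _, _, hjR', _⟩ := hq
    have hjb : j ∈ R b := by
      rcases hright with h | h | h
      · omega
      · exact absurd h (hempty (b + 1) (by omega) (by omega))
      · exact h
    exact hjR' b hab (by omega) hjb
  refine Set.ncard_eq_one.mpr ⟨(A, B), ?_⟩
  ext ⟨a, b⟩
  simp only [MutSet, Set.mem_setOf_eq, Set.mem_singleton_iff, Prod.mk.injEq]
  constructor
  · intro hq
    have haA : a = A := by
      rcases lt_trichotomy a A with h | h | h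
      · exact absurd (key a b A B hq hmutAB h) (fun hf => hf)
      · exact h
      · exact absurd (key A B a b hmutAB hq h) (fun hf => hf)
    subst haA
    have hbB : b = B := by
      rcases lt_trichotomy b B with h | h | h
      · exact absurd (keyb A b B hq hmutAB h) (fun hf => hf)
      · exact h
      · exact absurd (keyb A B b hmutAB hq h) (fun hf => hf)
    exact ⟨rfl, hbB⟩
  · rintro ⟨rfl, rfl⟩
    exact hmutAB
end

section
/- Let n ≥ 1 and let R = (R_1, …, R_{n−1}) be a flat family of subsets of {1, …, n+1}. If S and S′ are both R-admissible sequences with Sing(S) = ∅ and Sing(S′) = ∅, then their oriented mutation graphs are isomorphic: there exists a permutation σ of {1, …, n+1} such that |Mut_S(i,j)| = |Mut_{S′}(σ(i), σ(j))| for all i ≠ j. -/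
/- ######## auxiliary development ######## -/

/-- Entry column of row `i` in the chain `S` (with sentinel `n+1` for the absent row). -/
noncomputable def ent (n : ℕ) (S : ℕ → Finset ℕ) (i : ℕ) : ℕ :=
  if i ∈ S n then sInf {t | 1 ≤ t ∧ i ∈ S t} else n + 1

lemma key_of_sing {n : ℕ} {R S : ℕ → Finset ℕ} (hS : Sing n R S = ∅) {i j k h : ℕ}
    (hiIcc : i ∈ Finset.Icc 1 (n + 1)) (hk1 : 1 ≤ k) (hkh : k ≤ h) (hh : h ≤ n - 1)
    (hjS : j ∉ S (h + 1)) (hiR : i ∈ R h) (hjR : j ∈ R k)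
    (hiSall : ∀ t, k ≤ t → t ≤ h → i ∈ S t)
    (hiRnone : ∀ t, k ≤ t → t ≤ h - 1 → i ∉ R t) : False := by
  have hmem : (i, j, h + 1) ∈ Sing n R S := by
    refine ⟨hiIcc, h, rfl, ?_, hiR, hjS, k, hkh, ?_, hjR, hiSall, hiRnone⟩
    · simp only [Finset.mem_Icc]; omega
    · simp only [Finset.mem_Icc]; omega
  rw [hS] at hmem
  exact hmem

lemma nested_of_sing {n : ℕ} {R S : ℕ → Finset ℕ} (hadm : RAdmissible n R S)
    (hS : Sing n R S = ∅) : ∀ t, 1 ≤ t → t + 1 ≤ n → S t ⊆ S (t + 1) := by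
  intro t h1 h2 i hi
  by_contra hni
  have hsub := hadm.2.2 t h1 (by omega)
  have hiR : i ∈ R t := by
    rcases Finset.mem_union.mp (hsub hi) with h | h
    · exact absurd h hni
    · exact h
  have hiIcc : i ∈ Finset.Icc 1 (n + 1) := (hadm.2.1 t h1 (by omega)).1 hi
  exact key_of_sing hS hiIcc h1 le_rfl (by omega) hni hiR hiR
    (fun s hs1 hs2 => by have : s = t := by omega
                         rw [this]; exact hi)
    (fun s hs1 hs2 _ => by omega)

lemma chainUp {n : ℕ} {S : ℕ → Finset ℕ} (hNst : ∀ t, 1 ≤ t → t + 1 ≤ n → S t ⊆ S (t + 1))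
    {i t t' : ℕ} (h1 : 1 ≤ t) (h2 : t ≤ t') (h3 : t' ≤ n) (hi : i ∈ S t) : i ∈ S t' := by
  induction t', h2 using Nat.le_induction with
  | base => exact hi
  | succ m hm ih => exact hNst m (by omega) (by omega) (ih (by omega))

lemma ent_pos {n : ℕ} {S : ℕ → Finset ℕ} (hn : 1 ≤ n) (i : ℕ) : 1 ≤ ent n S i := by
  unfold ent
  split
  · rename_i hmem
    exact (Nat.sInf_mem (⟨n, hn, hmem⟩ : Set.Nonempty {t | 1 ≤ t ∧ i ∈ S t})).1
  · omega

lemma ent_le_top {n : ℕ} {S : ℕ → Finset ℕ} (hn : 1 ≤ n) (i : ℕ) : ent n S i ≤ n + 1 := by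
  unfold ent
  split
  · rename_i hmem
    exact le_trans (Nat.sInf_le ⟨hn, by simpa using hmem⟩) (by omega)
  · omega

lemma ent_le {n : ℕ} {S : ℕ → Finset ℕ}
    (hNst : ∀ t, 1 ≤ t → t + 1 ≤ n → S t ⊆ S (t + 1))
    {i t : ℕ} (h1 : 1 ≤ t) (h2 : t ≤ n) (hi : i ∈ S t) : ent n S i ≤ t := by
  have hSn : i ∈ S n := chainUp hNst h1 h2 le_rfl hi
  unfold ent
  rw [if_pos hSn]
  exact Nat.sInf_le ⟨h1, hi⟩

lemma mem_of_ent_le {n : ℕ} {S : ℕ → Finset ℕ} (hn : 1 ≤ n)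
    (hNst : ∀ t, 1 ≤ t → t + 1 ≤ n → S t ⊆ S (t + 1))
    {i t : ℕ} (h1 : 1 ≤ t) (h2 : ent n S i ≤ t) (h3 : t ≤ n) : i ∈ S t := by
  unfold ent at h2
  split at h2
  · rename_i hmem
    have hne : Set.Nonempty {t | 1 ≤ t ∧ i ∈ S t} := ⟨n, hn, hmem⟩
    have h4 := Nat.sInf_mem hne
    exact chainUp hNst h4.1 h2 h3 h4.2
  · omega

lemma notMem_of_lt_ent {n : ℕ} {S : ℕ → Finset ℕ}
    (hNst : ∀ t, 1 ≤ t → t + 1 ≤ n → S t ⊆ S (t + 1))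
    {i t : ℕ} (h1 : 1 ≤ t) (h3 : t ≤ n) (h2 : t < ent n S i) : i ∉ S t := by
  intro hmem
  have := ent_le hNst h1 h3 hmem
  omega

lemma mut_lt_start_false {n : ℕ} {R S : ℕ → Finset ℕ} (hadm : RAdmissible n R S)
    (hS : Sing n R S = ∅) {i j a b a' b' : ℕ}
    (h1 : IsMut n R S i j a b) (h2 : IsMut n R S i j a' b') (haa : a < a') : False := by
  have hNst := nested_of_sing hadm hS
  obtain ⟨ha1, hab, hbn, hiS, hiR, hleft, hjS, hjR, hright⟩ := h1
  obtain ⟨ha1', hab', hbn', hiS', hiR', hleft', hjS', hjR', hright'⟩ := h2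
  have hiSa : i ∈ S a := hiS a le_rfl hab
  -- i ∈ S (a'-1)
  have hiSa'1 : i ∈ S (a' - 1) := chainUp hNst ha1 (by omega) (by omega) hiSa
  have hiRa'1 : i ∈ R (a' - 1) := by
    rcases hleft' with h | h | h
    · omega
    · exact absurd hiSa'1 h
    · exact h
  -- b < a'
  have hba' : b < a' := by
    by_contra hh
    exact hiR (a' - 1) (by omega) (by omega) hiRa'1
  have hbn2 : b < n := by omega
  -- j ∈ R b
  have hjRb : j ∈ R b := by
    rcases hright with h | h | h
    · omega
    · exact absurd (chainUp hNst (by omega) (by omega) (by omega) h) (hjS' a' le_rfl hab')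
    · exact h
  -- minimal i-cut in [b, a'-1]
  set F := Finset.filter (fun t => i ∈ R t) (Finset.Icc b (a' - 1)) with hF
  have hFne : F.Nonempty := ⟨a' - 1, by
    rw [hF, Finset.mem_filter, Finset.mem_Icc]
    exact ⟨⟨by omega, le_rfl⟩, hiRa'1⟩⟩
  set h := F.min' hFne with hdefh
  have hhF : h ∈ F := F.min'_mem hFne
  rw [hF, Finset.mem_filter, Finset.mem_Icc] at hhF
  obtain ⟨⟨hbh, hha'⟩, hiRh⟩ := hhF
  have hiIcc : i ∈ Finset.Icc 1 (n + 1) := (hadm.2.1 a ha1 (by omega)).1 hiSa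
  refine key_of_sing hS hiIcc (k := b) (h := h) (by omega) hbh (by omega) ?_ hiRh hjRb ?_ ?_
  · -- j ∉ S (h+1)
    intro hjmem
    exact hjS' a' le_rfl hab' (chainUp hNst (by omega) (by omega) (by omega) hjmem)
  · intro t ht1 ht2
    exact chainUp hNst ha1 (by omega) (by omega) hiSa
  · intro t ht1 ht2 hcon
    have : t ∈ F := by
      rw [hF, Finset.mem_filter, Finset.mem_Icc]
      exact ⟨⟨ht1, by omega⟩, hcon⟩
    have := F.min'_le t this
    omega

lemma mut_subsingleton {n : ℕ} {R S : ℕ → Finset ℕ} (hadm : RAdmissible n R S)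
    (hS : Sing n R S = ∅) {i j a b a' b' : ℕ}
    (h1 : IsMut n R S i j a b) (h2 : IsMut n R S i j a' b') : a = a' ∧ b = b' := by
  have hNst := nested_of_sing hadm hS
  have haa : a = a' := by
    rcases Nat.lt_trichotomy a a' with h | h | h
    · exact absurd (mut_lt_start_false hadm hS h1 h2 h) id
    · exact h
    · exact absurd (mut_lt_start_false hadm hS h2 h1 h) id
  refine ⟨haa, ?_⟩
  -- b = b'
  have hbb : ∀ c d c' d', IsMut n R S i j c d → IsMut n R S i j c' d' → c = c' → d < d' → False := by
    intro c d c' d' m1 m2 hcc hdd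
    obtain ⟨ha1, hab, hbn, hiS, hiR, hleft, hjS, hjR, hright⟩ := m1
    obtain ⟨ha1', hab', hbn', hiS', hiR', hleft', hjS', hjR', hright'⟩ := m2
    rcases hright with h | h | h
    · omega
    · exact hjS' d' (by omega) le_rfl (chainUp hNst (by omega) (by omega) (by omega) h)
    · exact hjR' d (by omega) (by omega) h
  rcases Nat.lt_trichotomy b b' with h | h | h
  · exact absurd (hbb a b a' b' h1 h2 haa h) id
  · exact h
  · exact absurd (hbb a' b' a b h2 h1 haa.symm h) id

lemma mut_exists {n : ℕ} {R S : ℕ → Finset ℕ} (hn : 1 ≤ n)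
    (hNst : ∀ t, 1 ≤ t → t + 1 ≤ n → S t ⊆ S (t + 1))
    {i j : ℕ} (hcd : ent n S i < ent n S j) : ∃ a b, IsMut n R S i j a b := by
  set c := ent n S i with hc
  set d := ent n S j with hd
  have hc1 : 1 ≤ c := ent_pos hn i
  have hdtop : d ≤ n + 1 := ent_le_top hn j
  have hcn : c ≤ n := by omega
  classical
  -- choose b
  set Tj := Finset.filter (fun t => j ∈ R t) (Finset.Icc c (d - 2)) with hTj
  set b := if hne : Tj.Nonempty then Tj.min' hne else d - 1 with hb
  have hbprop : c ≤ b ∧ b ≤ d - 1 ∧ (j ∈ R b ∨ b = d - 1) ∧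
      (∀ t, c ≤ t → t ≤ b - 1 → j ∉ R t) := by
    rw [hb]
    split
    · rename_i hne
      have hmem : Tj.min' hne ∈ Finset.filter (fun t => j ∈ R t) (Finset.Icc c (d - 2)) :=
        Tj.min'_mem hne
      rw [Finset.mem_filter, Finset.mem_Icc] at hmem
      refine ⟨hmem.1.1, by omega, Or.inl hmem.2, ?_⟩
      intro t ht1 ht2 hcon
      have : t ∈ Tj := by
        rw [hTj, Finset.mem_filter, Finset.mem_Icc]
        exact ⟨⟨ht1, by omega⟩, hcon⟩
      have := Tj.min'_le t this
      omega
    · rename_i hne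
      refine ⟨by omega, le_rfl, Or.inr rfl, ?_⟩
      intro t ht1 ht2 hcon
      exact hne ⟨t, by rw [hTj, Finset.mem_filter, Finset.mem_Icc]; exact ⟨⟨ht1, by omega⟩, hcon⟩⟩
  obtain ⟨hcb, hbd, hbR, hjRnone⟩ := hbprop
  -- choose a
  set Ti := Finset.filter (fun t => i ∈ R t) (Finset.Icc c (b - 1)) with hTi
  set a := if hne : Ti.Nonempty then Ti.max' hne + 1 else c with ha
  have haprop : c ≤ a ∧ a ≤ b ∧ (i ∈ R (a - 1) ∨ a = c) ∧
      (∀ t, a ≤ t → t ≤ b - 1 → i ∉ R t) := by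
    rw [ha]
    split
    · rename_i hne
      have hmem : Ti.max' hne ∈ Finset.filter (fun t => i ∈ R t) (Finset.Icc c (b - 1)) :=
        Ti.max'_mem hne
      rw [Finset.mem_filter, Finset.mem_Icc] at hmem
      refine ⟨by omega, by omega, Or.inl (by simpa using hmem.2), ?_⟩
      intro t ht1 ht2 hcon
      have : t ∈ Ti := by
        rw [hTi, Finset.mem_filter, Finset.mem_Icc]
        exact ⟨⟨by omega, ht2⟩, hcon⟩
      have := Ti.le_max' t this
      omega
    · rename_i hne
      refine ⟨le_rfl, hcb, Or.inr rfl, ?_⟩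
      intro t ht1 ht2 hcon
      exact hne ⟨t, by rw [hTi, Finset.mem_filter, Finset.mem_Icc]; exact ⟨⟨ht1, ht2⟩, hcon⟩⟩
  obtain ⟨hca, hab, haR, hiRnone⟩ := haprop
  refine ⟨a, b, by omega, hab, by omega, ?_, hiRnone, ?_, ?_, fun t ht1 ht2 => hjRnone t (by omega) ht2, ?_⟩
  case _ =>
    intro t ht1 ht2
    exact mem_of_ent_le hn hNst (by omega) (by omega) (by omega)
  case _ =>
    rcases haR with h | h
    · exact Or.inr (Or.inr h)
    · rcases Nat.eq_or_lt_of_le hc1 with h1 | h1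
      · exact Or.inl (by omega)
      · refine Or.inr (Or.inl ?_)
        exact notMem_of_lt_ent hNst (by omega) (by omega) (by omega)
  case _ =>
    intro t ht1 ht2
    exact notMem_of_lt_ent hNst (by omega) (by omega) (by omega)
  case _ =>
    rcases hbR with h | h
    · exact Or.inr (Or.inr h)
    · rcases Nat.eq_or_lt_of_le hdtop with h1 | h1
      · exact Or.inl (by omega)
      · refine Or.inr (Or.inl ?_)
        have : j ∈ S d := mem_of_ent_le hn hNst (by omega) le_rfl (by omega)
        have hbd1 : b + 1 = d := by omega
        rwa [hbd1]

lemma mut_count {n : ℕ} {R S : ℕ → Finset ℕ} (hn : 1 ≤ n) (hadm : RAdmissible n R S)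
    (hS : Sing n R S = ∅) (i j : ℕ) :
    (MutSet n R S i j).ncard = if ent n S i < ent n S j then 1 else 0 := by
  have hNst := nested_of_sing hadm hS
  split
  · rename_i hcd
    obtain ⟨a, b, hm⟩ := mut_exists hn hNst hcd
    have : MutSet n R S i j = {(a, b)} := by
      ext ⟨a', b'⟩
      simp only [MutSet, Set.mem_setOf_eq, Set.mem_singleton_iff, Prod.mk.injEq]
      constructor
      · intro hm'
        obtain ⟨e1, e2⟩ := mut_subsingleton hadm hS hm hm'
        exact ⟨e1.symm, e2.symm⟩
      · rintro ⟨rfl, rfl⟩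
        exact hm
    rw [this, Set.ncard_singleton]
  · rename_i hcd
    have : MutSet n R S i j = ∅ := by
      ext ⟨a, b⟩
      simp only [MutSet, Set.mem_setOf_eq, Set.mem_empty_iff_false, iff_false]
      rintro ⟨ha1, hab, hbn, hiS, hiR, hleft, hjS, hjR, hright⟩
      have h1 : ent n S i ≤ a := ent_le hNst ha1 (by omega) (hiS a le_rfl hab)
      have h2 : ¬ (ent n S j ≤ b) := by
        intro hh
        exact hjS b hab le_rfl (mem_of_ent_le hn hNst (by omega) hh hbn)
      omega
    rw [this, Set.ncard_empty]

lemma ent_injOn {n : ℕ} {R S : ℕ → Finset ℕ} (hn : 1 ≤ n) (hadm : RAdmissible n R S)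
    (hS : Sing n R S = ∅) :
    Set.InjOn (ent n S) ↑(Finset.Icc 1 (n + 1)) := by
  have hNst := nested_of_sing hadm hS
  intro i hi j hj heq
  have hi' : i ∈ Finset.Icc 1 (n + 1) := hi
  have hj' : j ∈ Finset.Icc 1 (n + 1) := hj
  set m := ent n S i with hm
  have hm1 : 1 ≤ m := ent_pos hn i
  have hmtop : m ≤ n + 1 := ent_le_top hn i
  by_cases hmn : m ≤ n
  · -- i, j both enter at column m
    have hiS : i ∈ S m := mem_of_ent_le hn hNst (by omega) le_rfl hmn
    have hjS : j ∈ S m := mem_of_ent_le hn hNst (by omega) (le_of_eq heq.symm) hmn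
    rcases Nat.eq_or_lt_of_le hm1 with h1 | h1
    · -- m = 1 : S 1 is a singleton
      have hcard : (S 1).card = 1 := (hadm.2.1 1 le_rfl hn).2
      refine Finset.card_le_one.mp (le_of_eq hcard) i ?_ j ?_
      · rwa [← h1] at hiS
      · rwa [← h1] at hjS
    · -- m ≥ 2 : S m \ S (m-1) is a singleton
      have hsub : S (m - 1) ⊆ S m := by
        have h := hNst (m - 1) (by omega) (by omega)
        rwa [Nat.sub_add_cancel (by omega)] at h
      have hiN : i ∉ S (m - 1) := notMem_of_lt_ent hNst (by omega) (by omega) (by omega)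
      have hjN : j ∉ S (m - 1) := notMem_of_lt_ent hNst (by omega) (by omega) (by omega)
      have hcard : (S m \ S (m - 1)).card ≤ 1 := by
        rw [Finset.card_sdiff_of_subset hsub, (hadm.2.1 m (by omega) hmn).2,
          (hadm.2.1 (m - 1) (by omega) (by omega)).2]
        omega
      exact Finset.card_le_one.mp hcard i (Finset.mem_sdiff.mpr ⟨hiS, hiN⟩)
        j (Finset.mem_sdiff.mpr ⟨hjS, hjN⟩)
  · -- m = n + 1 : i, j both outside S n
    have hmeq : m = n + 1 := by omega
    have hiN : i ∉ S n := notMem_of_lt_ent hNst hn le_rfl (by omega)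
    have hjN : j ∉ S n := notMem_of_lt_ent hNst hn le_rfl (by omega)
    have hsub : S n ⊆ Finset.Icc 1 (n + 1) := (hadm.2.1 n hn le_rfl).1
    have hcard : ((Finset.Icc 1 (n + 1)) \ S n).card ≤ 1 := by
      rw [Finset.card_sdiff_of_subset hsub, (hadm.2.1 n hn le_rfl).2, Nat.card_Icc]
      omega
    exact Finset.card_le_one.mp hcard i (Finset.mem_sdiff.mpr ⟨hi', hiN⟩)
      j (Finset.mem_sdiff.mpr ⟨hj', hjN⟩)

lemma ent_bijOn {n : ℕ} {R S : ℕ → Finset ℕ} (hn : 1 ≤ n) (hadm : RAdmissible n R S)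
    (hS : Sing n R S = ∅) :
    Set.BijOn (ent n S) ↑(Finset.Icc 1 (n + 1)) ↑(Finset.Icc 1 (n + 1)) := by
  have hinj := ent_injOn hn hadm hS
  have hmaps : Set.MapsTo (ent n S) ↑(Finset.Icc 1 (n + 1)) ↑(Finset.Icc 1 (n + 1)) := by
    intro x _
    simp only [Finset.coe_Icc, Set.mem_Icc]
    exact ⟨ent_pos hn x, ent_le_top hn x⟩
  refine ⟨hmaps, hinj, ?_⟩
  classical
  have hsub : (Finset.Icc 1 (n + 1)).image (ent n S) ⊆ Finset.Icc 1 (n + 1) := by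
    intro y hy
    obtain ⟨x, hx, rfl⟩ := Finset.mem_image.mp hy
    rw [Finset.mem_Icc]
    exact ⟨ent_pos hn x, ent_le_top hn x⟩
  have himg : (Finset.Icc 1 (n + 1)).image (ent n S) = Finset.Icc 1 (n + 1) :=
    Finset.eq_of_subset_of_card_le hsub (le_of_eq (Finset.card_image_of_injOn hinj).symm)
  intro y hy
  have hy' : y ∈ Finset.Icc 1 (n + 1) := hy
  rw [← himg] at hy'
  obtain ⟨x, hx, hxy⟩ := Finset.mem_image.mp hy'
  exact ⟨x, hx, hxy⟩

/-- For a flat family `R`, any two `R`-admissible sequences `S`, `S'` with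
`Sing(S) = ∅` and `Sing(S') = ∅` have isomorphic oriented mutation graphs: there is a
permutation `σ` of `{1, …, n+1}` with `|Mut_S(i,j)| = |Mut_{S'}(σ i, σ j)|` for all
`i ≠ j`. -/
theorem smooth_points_isomorphic_mut_graphs (n : ℕ) (hn : 1 ≤ n) (R S S' : ℕ → Finset ℕ)
    (hflat : FlatFamily n R) (hadmS : RAdmissible n R S) (hadmS' : RAdmissible n R S')
    (hS : Sing n R S = ∅) (hS' : Sing n R S' = ∅) :
    ∃ σ : ℕ → ℕ,
      Set.BijOn σ ↑(Finset.Icc 1 (n + 1)) ↑(Finset.Icc 1 (n + 1)) ∧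
      ∀ i ∈ Finset.Icc 1 (n + 1), ∀ j ∈ Finset.Icc 1 (n + 1), i ≠ j →
        (MutSet n R S i j).ncard = (MutSet n R S' (σ i) (σ j)).ncard := by
  have bijS : Set.BijOn (ent n S) ↑(Finset.Icc 1 (n + 1)) ↑(Finset.Icc 1 (n + 1)) :=
    ent_bijOn hn hadmS hS
  have bijS' : Set.BijOn (ent n S') ↑(Finset.Icc 1 (n + 1)) ↑(Finset.Icc 1 (n + 1)) :=
    ent_bijOn hn hadmS' hS'
  have hinv := bijS'.invOn_invFunOn
  have bijInv : Set.BijOn (Function.invFunOn (ent n S') ↑(Finset.Icc 1 (n + 1)))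
      ↑(Finset.Icc 1 (n + 1)) ↑(Finset.Icc 1 (n + 1)) :=
    Set.BijOn.symm hinv.symm bijS'
  refine ⟨fun x => Function.invFunOn (ent n S') ↑(Finset.Icc 1 (n + 1)) (ent n S x),
    bijInv.comp bijS, ?_⟩
  intro i hi j hj _
  have hent : ∀ x ∈ Finset.Icc 1 (n + 1),
      ent n S' (Function.invFunOn (ent n S') ↑(Finset.Icc 1 (n + 1)) (ent n S x)) =
        ent n S x := by
    intro x hx
    exact hinv.2 (bijS.mapsTo hx)
  rw [mut_count hn hadmS hS i j, mut_count hn hadmS' hS', hent i hi, hent j hj]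
end
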